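/- arXiv:1804.01559 — 9 statements merged into one kernel-verified Lean document; each statement's English description precedes it below -/
import Mathlib

section
/- Let A be an idempotented algebra, M a non-degenerate left A-module, N any left A-module, and ψ : M → N an A-linear map. If for every idempotent e ∈ A the induced map eA ⊗_A M → eA ⊗_A N is injective, then ψ is injective. -/
open scoped TensorProduct

set_option linter.unusedSectionVars false

universe u

section Setup

variable (K : Type u) [CommRing K]
variable (A : Type u) [NonUnitalRing A] [Module K A]
  [SMulCommClass K A A] [IsScalarTower K A A]

/-- A (not necessarily non-degenerate) left module over the non-unital `K`-algebra `A`: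
an abelian group with compatible `K`- and `A`-actions, the `A`-action being `K`-bilinear. -/
class NUMod (M : Type u) [AddCommGroup M] [Module K M] extends SMul A M where
  asmul_add : ∀ (a : A) (m n : M), a • (m + n) = a • m + a • n
  add_asmul : ∀ (a b : A) (m : M), (a + b) • m = a • m + b • m
  mul_asmul : ∀ (a b : A) (m : M), (a * b) • m = a • (b • m)
  asmul_ksmul : ∀ (k : K) (a : A) (m : M), a • (k • m) = k • (a • m)
  ksmul_asmul : ∀ (k : K) (a : A) (m : M), (k • a) • m = k • (a • m)

/-- `A` is an idempotented algebra. -/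
def Idempotented : Prop :=
  (∀ a : A, ∃ e : A, e * e = e ∧ e * a = a ∧ a * e = a) ∧
  ∀ e₁ e₂ : A, e₁ * e₁ = e₁ → e₂ * e₂ = e₂ →
    ∃ e : A, e * e = e ∧ e * e₁ = e₁ ∧ e₁ * e = e₁ ∧ e * e₂ = e₂ ∧ e₂ * e = e₂

/-- A module is non-degenerate if every element is fixed by some idempotent of `A`. -/
def Nondeg (M : Type u) [AddCommGroup M] [Module K M] [NUMod K A M] : Prop :=
  ∀ m : M, ∃ e : A, e * e = e ∧ e • m = m

/-- A `K`-submodule which is stable under the `A`-action, i.e. an `A`-submodule. -/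
def AStable {M : Type u} [AddCommGroup M] [Module K M] [NUMod K A M]
    (S : Submodule K M) : Prop :=
  ∀ a : A, ∀ m ∈ S, a • m ∈ S

/-- `A`-linearity of a `K`-linear map between `A`-modules. -/
def IsAMap {M N : Type u} [AddCommGroup M] [Module K M] [NUMod K A M]
    [AddCommGroup N] [Module K N] [NUMod K A N] (f : M →ₗ[K] N) : Prop :=
  ∀ (a : A) (m : M), f (a • m) = a • f m

theorem asmul_zero {M : Type u} [AddCommGroup M] [Module K M] [NUMod K A M] (a : A) :
    a • (0 : M) = 0 := by
  have h := NUMod.asmul_add (K := K) (A := A) a (0 : M) 0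
  rw [add_zero] at h
  exact add_left_cancel (show a • (0 : M) + a • (0 : M) = a • (0 : M) + 0 by
    rw [add_zero]; exact h.symm)

variable {A}

/-- The subset `eM = {e m : m ∈ M}` of a module `M`, as a `K`-submodule. -/
def eSub (e : A) (M : Type u) [AddCommGroup M] [Module K M] [NUMod K A M] :
    Submodule K M where
  carrier := {m : M | ∃ n : M, e • n = m}
  zero_mem' := ⟨0, asmul_zero K A e⟩
  add_mem' := by
    rintro x y ⟨m, rfl⟩ ⟨n, rfl⟩
    exact ⟨m + n, NUMod.asmul_add e m n⟩
  smul_mem' := by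
    rintro k x ⟨m, rfl⟩
    exact ⟨k • m, NUMod.asmul_ksmul k e m⟩

/-- The submodule `AeM` of `M` generated by the elements `a • (e • m)`. -/
def aeSpan (e : A) (M : Type u) [AddCommGroup M] [Module K M] [NUMod K A M] :
    Submodule K M :=
  Submodule.span K {x : M | ∃ (a : A) (m : M), a • (e • m) = x}

/-- The left ideal `Ae = {a e : a ∈ A}` (for an idempotent `e`), as a `K`-submodule of `A`. -/
def leftIdeal (e : A) : Submodule K A where
  carrier := {x : A | ∃ a : A, a * e = x}
  zero_mem' := ⟨0, zero_mul e⟩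
  add_mem' := by
    rintro x y ⟨a, rfl⟩ ⟨b, rfl⟩
    exact ⟨a + b, add_mul a b e⟩
  smul_mem' := by
    rintro k x ⟨a, rfl⟩
    exact ⟨k • a, smul_mul_assoc k a e⟩

/-- The right ideal `eA = {e a : a ∈ A}` (for an idempotent `e`), as a `K`-submodule of `A`. -/
def rightIdeal (e : A) : Submodule K A where
  carrier := {x : A | ∃ a : A, e * a = x}
  zero_mem' := ⟨0, mul_zero e⟩
  add_mem' := by
    rintro x y ⟨a, rfl⟩ ⟨b, rfl⟩
    exact ⟨a + b, mul_add e a b⟩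
  smul_mem' := by
    rintro k x ⟨a, rfl⟩
    exact ⟨k • a, mul_smul_comm k e a⟩

/-- The `A`-balancing relations inside `eA ⊗_K M`, whose quotient is `eA ⊗_A M`. -/
def brel (e : A) (M : Type u) [AddCommGroup M] [Module K M] [NUMod K A M] :
    Submodule K (↥(rightIdeal K e) ⊗[K] M) :=
  Submodule.span K {z : ↥(rightIdeal K e) ⊗[K] M |
    ∃ (x y : ↥(rightIdeal K e)) (a : A) (m : M),
      (y : A) = (x : A) * a ∧ z = y ⊗ₜ[K] m - x ⊗ₜ[K] (a • m)}

/-- The `A`-balancing relations inside `eA ⊗_K S` for a `K`-submodule `S ≤ M`. -/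
def brelSub (e : A) {M : Type u} [AddCommGroup M] [Module K M] [NUMod K A M]
    (S : Submodule K M) : Submodule K (↥(rightIdeal K e) ⊗[K] ↥S) :=
  Submodule.span K {z : ↥(rightIdeal K e) ⊗[K] ↥S |
    ∃ (x y : ↥(rightIdeal K e)) (a : A) (m m' : ↥S),
      (y : A) = (x : A) * a ∧ (m' : M) = a • (m : M) ∧ z = y ⊗ₜ[K] m - x ⊗ₜ[K] m'}

variable (A)

/-- An idempotent `e` is left special if the class of non-degenerate modules `M` with
`M = AeM` is closed under subquotients: for `A`-stable submodules `Ksub ≤ H` of such an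
`M`, the subquotient `H/Ksub` is again generated by its `e`-fixed vectors. -/
def LeftSpecial (e : A) : Prop :=
  ∀ (X : Type u) [AddCommGroup X] [Module K X] [NUMod K A X],
    Nondeg K A X → aeSpan K e X = ⊤ →
    ∀ Ksub H : Submodule K X, AStable K A Ksub → AStable K A H → Ksub ≤ H →
      H ≤ Ksub ⊔ Submodule.span K {x : X | ∃ a : A, ∃ m ∈ H, a • (e • m) = x}

end Setup

/-- if `M` is a non-degenerate `A`-module, `N` any `A`-module, and
`ψ : M → N` is `A`-linear such that for every idempotent `e` the induced map
`eA ⊗_A M → eA ⊗_A N` is injective, then `ψ` is injective. -/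
theorem injective_of_tensor_injective
    {K A : Type u} [CommRing K] [NonUnitalRing A] [Module K A]
    [SMulCommClass K A A] [IsScalarTower K A A]
    (hA : Idempotented A)
    (M N : Type u) [AddCommGroup M] [Module K M] [NUMod K A M]
    [AddCommGroup N] [Module K N] [NUMod K A N]
    (hM : Nondeg K A M) (ψ : M →ₗ[K] N) (hψ : IsAMap K A ψ)
    (hinj : ∀ e : A, e * e = e →
      ∀ Ψ : ((↥(rightIdeal K e) ⊗[K] M) ⧸ brel K e M) →ₗ[K]
            ((↥(rightIdeal K e) ⊗[K] N) ⧸ brel K e N),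
        (∀ (x : ↥(rightIdeal K e)) (m : M),
          Ψ (Submodule.Quotient.mk (x ⊗ₜ[K] m)) = Submodule.Quotient.mk (x ⊗ₜ[K] ψ m)) →
        Function.Injective Ψ) :
    Function.Injective ψ := by
  rw [injective_iff_map_eq_zero]
  intro m hm
  obtain ⟨e, he, hem⟩ := hM m
  -- the bilinear action map b : eA → M → M, x m ↦ x • m
  let b : ↥(rightIdeal K e) →ₗ[K] M →ₗ[K] M :=
    { toFun := fun x =>
        { toFun := fun n => (x : A) • n
          map_add' := fun n₁ n₂ => NUMod.asmul_add (x : A) n₁ n₂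
          map_smul' := fun k n => NUMod.asmul_ksmul k (x : A) n }
      map_add' := fun x y => by
        ext n; exact NUMod.add_asmul (x : A) (y : A) n
      map_smul' := fun k x => by
        ext n; exact NUMod.ksmul_asmul k (x : A) n }
  let μ : ↥(rightIdeal K e) ⊗[K] M →ₗ[K] M := TensorProduct.lift b
  have hμker : brel K e M ≤ LinearMap.ker μ := by
    rw [brel, Submodule.span_le]
    rintro z ⟨x, y, a, n, hy, rfl⟩
    simp only [SetLike.mem_coe, LinearMap.mem_ker, map_sub, μ, TensorProduct.lift.tmul]
    show (y : A) • n - (x : A) • (a • n) = 0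
    rw [hy, NUMod.mul_asmul, sub_self]
  let μbar : ((↥(rightIdeal K e) ⊗[K] M) ⧸ brel K e M) →ₗ[K] M :=
    Submodule.liftQ _ μ hμker
  -- the induced map Ψ
  let φ : ↥(rightIdeal K e) ⊗[K] M →ₗ[K] ((↥(rightIdeal K e) ⊗[K] N) ⧸ brel K e N) :=
    (brel K e N).mkQ ∘ₗ TensorProduct.map LinearMap.id ψ
  have hφker : brel K e M ≤ LinearMap.ker φ := by
    rw [brel, Submodule.span_le]
    rintro z ⟨x, y, a, n, hy, rfl⟩
    simp only [SetLike.mem_coe, LinearMap.mem_ker, map_sub, φ, LinearMap.comp_apply,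
      TensorProduct.map_tmul, LinearMap.id_apply]
    rw [hψ a n]
    rw [← map_sub, Submodule.mkQ_apply, Submodule.Quotient.mk_eq_zero]
    exact Submodule.subset_span ⟨x, y, a, ψ n, hy, rfl⟩
  let Ψ : ((↥(rightIdeal K e) ⊗[K] M) ⧸ brel K e M) →ₗ[K]
      ((↥(rightIdeal K e) ⊗[K] N) ⧸ brel K e N) :=
    Submodule.liftQ _ φ hφker
  have hΨ : ∀ (x : ↥(rightIdeal K e)) (n : M),
      Ψ (Submodule.Quotient.mk (x ⊗ₜ[K] n)) = Submodule.Quotient.mk (x ⊗ₜ[K] ψ n) :=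
    fun x n => rfl
  have hinjΨ := hinj e he Ψ hΨ
  set ebar : ↥(rightIdeal K e) := ⟨e, ⟨e, he⟩⟩ with hebar
  have h0 : Ψ (Submodule.Quotient.mk (ebar ⊗ₜ[K] m)) = 0 := by
    rw [hΨ, hm, TensorProduct.tmul_zero]
    exact congrArg _ rfl
  have := hinjΨ (a₁ := Submodule.Quotient.mk (ebar ⊗ₜ[K] m)) (a₂ := 0) (by
    simpa using h0)
  have hmu : μbar (Submodule.Quotient.mk (ebar ⊗ₜ[K] m)) = m := by
    show (ebar : A) • m = m
    exact hem
  rw [this] at hmu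
  simpa using hmu.symm
end

section
/- Let A, B be idempotented algebras, L an (A, B)-bimodule, and N a non-degenerate left B-module. Then the natural map ν_A(L) ⊗_B N → ν_A(L ⊗_B N) is an isomorphism of left A-modules. -/
open scoped TensorProduct

set_option linter.unusedSectionVars false

universe u

section RightMod

variable (K : Type u) [CommRing K]
variable (B : Type u) [NonUnitalRing B] [Module K B]

/-- A right module over the non-unital `K`-algebra `B`. -/
class NUModR (M : Type u) [AddCommGroup M] [Module K M] where
  rsmul : M → B → M
  add_rsmul : ∀ (m n : M) (b : B), rsmul (m + n) b = rsmul m b + rsmul n b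
  rsmul_add : ∀ (m : M) (b b' : B), rsmul m (b + b') = rsmul m b + rsmul m b'
  rsmul_mul : ∀ (m : M) (b b' : B), rsmul m (b * b') = rsmul (rsmul m b) b'
  ksmul_rsmul : ∀ (k : K) (m : M) (b : B), rsmul (k • m) b = k • rsmul m b
  rsmul_ksmul : ∀ (k : K) (m : M) (b : B), rsmul m (k • b) = k • rsmul m b

end RightMod

/-- Notation-friendly right action. -/
abbrev rmul {K : Type u} [CommRing K] {B : Type u} [NonUnitalRing B] [Module K B]
    {M : Type u} [AddCommGroup M] [Module K M] [NUModR K B M] (m : M) (b : B) : M :=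
  NUModR.rsmul K m b

/-- let `A`, `B` be idempotented algebras, `L` an `(A,B)`-bimodule and `N`
a non-degenerate left `B`-module.  Then the natural map `ν_A(L) ⊗_B N → ν_A(L ⊗_B N)`
is an isomorphism of left `A`-modules.  The tensor products over `B` are realized as
quotients of `K`-tensor products by the `B`-balancing relations `R1`, `R2`; `α` and `β`
are the induced `A`-actions on them; `νL` and `νT` are the non-degenerate parts for the
`A`-actions. -/
theorem nu_tensor_iso
    {K A B : Type u} [CommRing K]
    [NonUnitalRing A] [Module K A] [SMulCommClass K A A] [IsScalarTower K A A]
    [NonUnitalRing B] [Module K B] [SMulCommClass K B B] [IsScalarTower K B B]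
    (hA : Idempotented A) (hB : Idempotented B)
    (L : Type u) [AddCommGroup L] [Module K L] [NUMod K A L] [NUModR K B L]
    (hLbimod : ∀ (a : A) (l : L) (b : B), rmul (K := K) (a • l) b = a • rmul (K := K) l b)
    (N : Type u) [AddCommGroup N] [Module K N] [NUMod K B N] (hN : Nondeg K B N)
    (νL : Submodule K L)
    (hνL : (νL : Set L) = {l : L | ∃ e : A, e * e = e ∧ e • l = l})
    (hνLr : ∀ (b : B), ∀ l ∈ νL, rmul (K := K) l b ∈ νL)
    (R1 : Submodule K (↥νL ⊗[K] N))
    (hR1 : R1 = Submodule.span K {z : ↥νL ⊗[K] N | ∃ (x y : ↥νL) (b : B) (n : N),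
      (y : L) = rmul (K := K) (x : L) b ∧ z = y ⊗ₜ[K] n - x ⊗ₜ[K] (b • n)})
    (R2 : Submodule K (L ⊗[K] N))
    (hR2 : R2 = Submodule.span K {z : L ⊗[K] N | ∃ (l : L) (b : B) (n : N),
      z = (rmul (K := K) l b) ⊗ₜ[K] n - l ⊗ₜ[K] (b • n)})
    (α : A → ((↥νL ⊗[K] N) ⧸ R1) →ₗ[K] ((↥νL ⊗[K] N) ⧸ R1))
    (hα : ∀ (a : A) (x y : ↥νL) (n : N), (y : L) = a • (x : L) →
      α a (Submodule.Quotient.mk (x ⊗ₜ[K] n)) = Submodule.Quotient.mk (y ⊗ₜ[K] n))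
    (β : A → ((L ⊗[K] N) ⧸ R2) →ₗ[K] ((L ⊗[K] N) ⧸ R2))
    (hβ : ∀ (a : A) (l : L) (n : N),
      β a (Submodule.Quotient.mk (l ⊗ₜ[K] n)) = Submodule.Quotient.mk ((a • l) ⊗ₜ[K] n))
    (νT : Submodule K ((L ⊗[K] N) ⧸ R2))
    (hνT : (νT : Set ((L ⊗[K] N) ⧸ R2)) =
      {t : (L ⊗[K] N) ⧸ R2 | ∃ e : A, e * e = e ∧ β e t = t}) :
    ∃ Φ : ((↥νL ⊗[K] N) ⧸ R1) ≃ₗ[K] ↥νT,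
      (∀ (x : ↥νL) (n : N),
        ((Φ (Submodule.Quotient.mk (x ⊗ₜ[K] n)) : (L ⊗[K] N) ⧸ R2)) =
          Submodule.Quotient.mk ((x : L) ⊗ₜ[K] n)) ∧
      (∀ (a : A) (t : (↥νL ⊗[K] N) ⧸ R1),
        ((Φ (α a t) : (L ⊗[K] N) ⧸ R2)) = β a ↑(Φ t)) := by

  classical
  obtain ⟨hA1, hA2⟩ := hA
  -- membership of e • l in νL for idempotent e
  have memν : ∀ (e : A), e * e = e → ∀ l : L, e • l ∈ νL := by
    intro e he l
    have h : e • (e • l) = e • l := by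
      rw [← NUMod.mul_asmul, he]
    rw [← SetLike.mem_coe, hνL]
    exact ⟨e, he, h⟩
  -- the e-action as a K-linear map L → L
  let S : A → L →ₗ[K] L := fun e =>
    { toFun := fun l => e • l
      map_add' := NUMod.asmul_add e
      map_smul' := fun k l => NUMod.asmul_ksmul k e l }
  -- corestricted to νL
  let Idem := {e : A // e * e = e}
  let F : Idem → (L →ₗ[K] ↥νL) := fun e =>
    LinearMap.codRestrict νL (S e.1) (fun l => memν e.1 e.2 l)
  let G : Idem → (↥νL →ₗ[K] ↥νL) := fun e => (F e).comp νL.subtype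
  have hGcomp : ∀ e e₁ : Idem, e.1 * e₁.1 = e₁.1 → (G e).comp (G e₁) = G e₁ := by
    intro e e₁ h
    ext x
    simp only [LinearMap.comp_apply, G, F, LinearMap.codRestrict_apply,
      Submodule.coe_subtype]
    show e.1 • (e₁.1 • (x : L)) = e₁.1 • (x : L)
    rw [← NUMod.mul_asmul, h]
  -- every element of νL ⊗ N is fixed by some G e ⊗ id
  have dom : ∀ z : ↥νL ⊗[K] N, ∃ e : Idem,
      TensorProduct.map (G e) LinearMap.id z = z := by
    intro z
    induction z using TensorProduct.induction_on with
    | zero =>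
      obtain ⟨e, he, -, -⟩ := hA1 0
      exact ⟨⟨e, he⟩, map_zero _⟩
    | tmul x n =>
      have hx : (x : L) ∈ (νL : Set L) := x.2
      rw [hνL] at hx
      obtain ⟨e, he, hex⟩ := hx
      refine ⟨⟨e, he⟩, ?_⟩
      rw [TensorProduct.map_tmul]
      congr 1
      exact Subtype.ext hex
    | add z1 z2 ih1 ih2 =>
      obtain ⟨e1, h1⟩ := ih1
      obtain ⟨e2, h2⟩ := ih2
      obtain ⟨e, he, he1, -, he2, -⟩ := hA2 e1.1 e2.1 e1.2 e2.2
      refine ⟨⟨e, he⟩, ?_⟩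
      have k1 : TensorProduct.map (G ⟨e, he⟩) LinearMap.id z1 = z1 := by
        conv_lhs => rw [← h1]
        rw [← LinearMap.comp_apply, ← TensorProduct.map_comp,
          hGcomp ⟨e, he⟩ e1 he1, LinearMap.id_comp, h1]
      have k2 : TensorProduct.map (G ⟨e, he⟩) LinearMap.id z2 = z2 := by
        conv_lhs => rw [← h2]
        rw [← LinearMap.comp_apply, ← TensorProduct.map_comp,
          hGcomp ⟨e, he⟩ e2 he2, LinearMap.id_comp, h2]
      rw [map_add, k1, k2]
  -- the inclusion νL ⊗ N → L ⊗ N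
  let ι : ↥νL ⊗[K] N →ₗ[K] L ⊗[K] N := TensorProduct.map νL.subtype LinearMap.id
  have hι : ∀ (x : ↥νL) (n : N), ι (x ⊗ₜ[K] n) = (x : L) ⊗ₜ[K] n := fun x n => rfl
  -- R1 maps into R2
  have hR1R2 : R1 ≤ LinearMap.ker (R2.mkQ.comp ι) := by
    rw [hR1, Submodule.span_le]
    rintro z ⟨x, y, b, n, hy, rfl⟩
    simp only [SetLike.mem_coe, LinearMap.mem_ker, LinearMap.comp_apply, map_sub, hι]
    rw [Submodule.mkQ_apply, Submodule.mkQ_apply, ← Submodule.Quotient.mk_sub,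
      Submodule.Quotient.mk_eq_zero, hR2]
    apply Submodule.subset_span
    exact ⟨(x : L), b, n, by rw [hy]⟩
  -- the induced map g on the quotient
  let g : ((↥νL ⊗[K] N) ⧸ R1) →ₗ[K] ((L ⊗[K] N) ⧸ R2) := R1.liftQ (R2.mkQ.comp ι) hR1R2
  have hg : ∀ (x : ↥νL) (n : N),
      g (Submodule.Quotient.mk (x ⊗ₜ[K] n)) = Submodule.Quotient.mk ((x : L) ⊗ₜ[K] n) := by
    intro x n
    rfl
  -- injectivity of g
  have hginj : Function.Injective g := by
    rw [← LinearMap.ker_eq_bot, eq_bot_iff]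
    rintro z hz
    obtain ⟨w, rfl⟩ := Submodule.Quotient.mk_surjective R1 z
    have hw : ι w ∈ R2 := by
      rw [← Submodule.Quotient.mk_eq_zero]
      exact hz
    obtain ⟨e, hew⟩ := dom w
    -- the retraction L ⊗ N → (νL ⊗ N)/R1 induced by e
    let Ee : L ⊗[K] N →ₗ[K] ((↥νL ⊗[K] N) ⧸ R1) :=
      R1.mkQ.comp (TensorProduct.map (F e) LinearMap.id)
    have hR2ker : R2 ≤ LinearMap.ker Ee := by
      rw [hR2, Submodule.span_le]
      rintro z ⟨l, b, n, rfl⟩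
      simp only [SetLike.mem_coe, LinearMap.mem_ker, Ee, LinearMap.comp_apply, map_sub,
        TensorProduct.map_tmul, LinearMap.id_apply]
      rw [Submodule.mkQ_apply, Submodule.mkQ_apply, ← Submodule.Quotient.mk_sub,
        Submodule.Quotient.mk_eq_zero, hR1]
      apply Submodule.subset_span
      refine ⟨F e l, F e (rmul (K := K) l b), b, n, ?_, rfl⟩
      show e.1 • rmul (K := K) l b = rmul (K := K) (e.1 • l) b
      rw [hLbimod]
    have key : Ee (ι w) = Submodule.Quotient.mk w := by
      have comp1 : (TensorProduct.map (F e) LinearMap.id).comp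
          (TensorProduct.map νL.subtype (LinearMap.id (R := K) (M := N)))
          = TensorProduct.map (G e) LinearMap.id := by
        rw [← TensorProduct.map_comp, LinearMap.id_comp]
      have h2 : TensorProduct.map (F e) LinearMap.id (ι w)
          = TensorProduct.map (G e) LinearMap.id w := by
        show ((TensorProduct.map (F e) LinearMap.id).comp
          (TensorProduct.map νL.subtype LinearMap.id)) w = _
        rw [comp1]
      show R1.mkQ (TensorProduct.map (F e) LinearMap.id (ι w)) = _
      rw [h2, hew, Submodule.mkQ_apply]
    have : Ee (ι w) = 0 := hR2ker hw
    rw [key] at this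
    simp [this]
  -- range of g lands in νT
  have hrange : ∀ z, g z ∈ νT := by
    intro z
    obtain ⟨w, rfl⟩ := Submodule.Quotient.mk_surjective R1 z
    induction w using TensorProduct.induction_on with
    | zero =>
      rw [Submodule.Quotient.mk_zero, map_zero]
      exact νT.zero_mem
    | tmul x n =>
      rw [hg]
      have hx : (x : L) ∈ (νL : Set L) := x.2
      rw [hνL] at hx
      obtain ⟨e, he, hex⟩ := hx
      rw [← SetLike.mem_coe, hνT]
      refine ⟨e, he, ?_⟩
      rw [hβ, hex]
    | add z1 z2 ih1 ih2 =>
      rw [Submodule.Quotient.mk_add, map_add]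
      exact νT.add_mem ih1 ih2
  -- surjectivity onto νT
  have hsurj : ∀ t ∈ νT, ∃ z, g z = t := by
    intro t ht
    rw [← SetLike.mem_coe, hνT] at ht
    obtain ⟨e, he, hβt⟩ := ht
    obtain ⟨w, rfl⟩ := Submodule.Quotient.mk_surjective R2 t
    have main : ∀ w : L ⊗[K] N, ∃ z, g z = β e (Submodule.Quotient.mk w) := by
      intro w
      induction w using TensorProduct.induction_on with
      | zero =>
        refine ⟨0, ?_⟩
        rw [map_zero, Submodule.Quotient.mk_zero, map_zero]
      | tmul l n =>
        refine ⟨Submodule.Quotient.mk ((F ⟨e, he⟩ l) ⊗ₜ[K] n), ?_⟩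
        rw [hg, hβ]
        rfl
      | add w1 w2 ih1 ih2 =>
        obtain ⟨z1, h1⟩ := ih1
        obtain ⟨z2, h2⟩ := ih2
        refine ⟨z1 + z2, ?_⟩
        rw [map_add, h1, h2, Submodule.Quotient.mk_add, map_add]
    obtain ⟨z, hz⟩ := main w
    exact ⟨z, by rw [hz, hβt]⟩
  -- build the equivalence
  let g' : ((↥νL ⊗[K] N) ⧸ R1) →ₗ[K] ↥νT := g.codRestrict νT hrange
  have hbij : Function.Bijective g' := by
    constructor
    · intro a b hab
      apply hginj
      have := congrArg (Subtype.val) hab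
      exact this
    · rintro ⟨t, ht⟩
      obtain ⟨z, hz⟩ := hsurj t ht
      exact ⟨z, Subtype.ext hz⟩
  refine ⟨LinearEquiv.ofBijective g' hbij, ?_, ?_⟩
  · intro x n
    exact hg x n
  · intro a t
    show g (α a t) = β a (g t)
    obtain ⟨w, rfl⟩ := Submodule.Quotient.mk_surjective R1 t
    induction w using TensorProduct.induction_on with
    | zero =>
      simp only [Submodule.Quotient.mk_zero, map_zero]
    | tmul x n =>
      obtain ⟨e, he, hea, -⟩ := hA1 a
      have hmem : a • (x : L) ∈ νL := by
        rw [← SetLike.mem_coe, hνL]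
        refine ⟨e, he, ?_⟩
        rw [← NUMod.mul_asmul, hea]
      rw [hα a x ⟨a • (x : L), hmem⟩ n rfl, hg, hg, hβ]
    | add w1 w2 ih1 ih2 =>
      rw [Submodule.Quotient.mk_add, map_add, map_add, map_add, map_add, ih1, ih2]
end

section
/- Let A, B be idempotented algebras, M a non-degenerate left A-module, N a non-degenerate left B-module, and L a (B, A)-bimodule. Then there is a natural K-module isomorphism Hom_B(ν_B(L) ⊗_A M, N) ≅ Hom_A(M, ν_A(Hom_B(ν_B(L), N))), given by f ↦ (m ↦ (l ↦ f(l ⊗ m))). -/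
open scoped TensorProduct

set_option linter.unusedSectionVars false

universe u

set_option maxHeartbeats 2000000 in
/-- let `A`, `B` be idempotented algebras, `M` a non-degenerate left
`A`-module, `N` a non-degenerate left `B`-module and `L` a `(B,A)`-bimodule.  Then
there is a natural `K`-module isomorphism
`Hom_B(ν_B(L) ⊗_A M, N) ≅ Hom_A(M, ν_A(Hom_B(ν_B(L), N)))`
given by `f ↦ (m ↦ (l ↦ f(l ⊗ m)))`.  The tensor product over `A` is realized as the
quotient of the `K`-tensor product by the balancing relations `R`; `β` is the `B`-action
on it; `ρ` is the `A`-action on `Hom_B(ν_B(L), N)` coming from the right `A`-action on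
`L`. -/
theorem hom_tensor_adjunction
    {K A B : Type u} [CommRing K]
    [NonUnitalRing A] [Module K A] [SMulCommClass K A A] [IsScalarTower K A A]
    [NonUnitalRing B] [Module K B] [SMulCommClass K B B] [IsScalarTower K B B]
    (hA : Idempotented A) (hB : Idempotented B)
    (M : Type u) [AddCommGroup M] [Module K M] [NUMod K A M] (hM : Nondeg K A M)
    (N : Type u) [AddCommGroup N] [Module K N] [NUMod K B N] (hN : Nondeg K B N)
    (L : Type u) [AddCommGroup L] [Module K L] [NUMod K B L] [NUModR K A L]
    (hLbimod : ∀ (b : B) (l : L) (a : A),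
      rmul (K := K) (b • l) a = b • rmul (K := K) l a)
    -- ν_B(L), a sub-bimodule of L
    (νL : Submodule K L)
    (hνL : (νL : Set L) = {l : L | ∃ e : B, e * e = e ∧ e • l = l})
    (hνLl : ∀ (b : B), ∀ l ∈ νL, b • l ∈ νL)
    (hνLr : ∀ (a : A), ∀ l ∈ νL, rmul (K := K) l a ∈ νL)
    -- ν_B(L) ⊗_A M as a quotient of ν_B(L) ⊗_K M
    (R : Submodule K (↥νL ⊗[K] M))
    (hR : R = Submodule.span K {z : ↥νL ⊗[K] M | ∃ (x y : ↥νL) (a : A) (m : M),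
      (y : L) = rmul (K := K) (x : L) a ∧ z = y ⊗ₜ[K] m - x ⊗ₜ[K] (a • m)})
    -- the B-action on ν_B(L) ⊗_A M
    (β : B → ((↥νL ⊗[K] M) ⧸ R) →ₗ[K] ((↥νL ⊗[K] M) ⧸ R))
    (hβ : ∀ (b : B) (x y : ↥νL) (m : M), (y : L) = b • (x : L) →
      β b (Submodule.Quotient.mk (x ⊗ₜ[K] m)) = Submodule.Quotient.mk (y ⊗ₜ[K] m))
    -- Hom_B(ν_B(L) ⊗_A M, N)
    (H1 : Submodule K (((↥νL ⊗[K] M) ⧸ R) →ₗ[K] N))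
    (hH1 : (H1 : Set (((↥νL ⊗[K] M) ⧸ R) →ₗ[K] N)) =
      {F | ∀ (b : B) (t : (↥νL ⊗[K] M) ⧸ R), F (β b t) = b • F t})
    -- Hom_B(ν_B(L), N)
    (HB : Submodule K (↥νL →ₗ[K] N))
    (hHB : (HB : Set (↥νL →ₗ[K] N)) =
      {g | ∀ (b : B) (x y : ↥νL), (y : L) = b • (x : L) → g y = b • g x})
    -- the A-action on Hom_B(ν_B(L), N): (a · g)(l) = g(l · a)
    (ρ : A → ↥HB →ₗ[K] ↥HB)
    (hρ : ∀ (a : A) (g : ↥HB) (x y : ↥νL), (y : L) = rmul (K := K) (x : L) a →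
      ((ρ a g : ↥νL →ₗ[K] N)) x = ((g : ↥νL →ₗ[K] N)) y)
    -- ν_A(Hom_B(ν_B(L), N))
    (νH : Submodule K ↥HB)
    (hνH : (νH : Set ↥HB) = {g : ↥HB | ∃ e : A, e * e = e ∧ ρ e g = g})
    (hνHst : ∀ (a : A), ∀ g ∈ νH, ρ a g ∈ νH)
    -- Hom_A(M, ν_A(Hom_B(ν_B(L), N)))
    (H2 : Submodule K (M →ₗ[K] ↥νH))
    (hH2 : (H2 : Set (M →ₗ[K] ↥νH)) =
      {h | ∀ (a : A) (m : M), ((h (a • m) : ↥HB)) = ρ a ↑(h m)}) :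
    ∃ Φ : ↥H1 ≃ₗ[K] ↥H2,
      ∀ (F : ↥H1) (m : M) (x : ↥νL),
        ((((Φ F : M →ₗ[K] ↥νH) m : ↥HB) : ↥νL →ₗ[K] N)) x =
          ((F : ((↥νL ⊗[K] M) ⧸ R) →ₗ[K] N)) (Submodule.Quotient.mk (x ⊗ₜ[K] m)) := by

  classical
  -- unpacked membership criteria
  have memH1 : ∀ F : ((↥νL ⊗[K] M) ⧸ R) →ₗ[K] N, F ∈ H1 →
      ∀ (b : B) (t : (↥νL ⊗[K] M) ⧸ R), F (β b t) = b • F t := by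
    intro F hF
    rw [← SetLike.mem_coe, hH1] at hF
    exact hF
  have memH1' : ∀ F : ((↥νL ⊗[K] M) ⧸ R) →ₗ[K] N,
      (∀ (b : B) (t : (↥νL ⊗[K] M) ⧸ R), F (β b t) = b • F t) → F ∈ H1 := by
    intro F hF
    rw [← SetLike.mem_coe, hH1]
    exact hF
  have memHB : ∀ g : ↥νL →ₗ[K] N, g ∈ HB →
      ∀ (b : B) (x y : ↥νL), (y : L) = b • (x : L) → g y = b • g x := by
    intro g hg
    rw [← SetLike.mem_coe, hHB] at hg
    exact hg
  have memHB' : ∀ g : ↥νL →ₗ[K] N,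
      (∀ (b : B) (x y : ↥νL), (y : L) = b • (x : L) → g y = b • g x) → g ∈ HB := by
    intro g hg
    rw [← SetLike.mem_coe, hHB]
    exact hg
  have memH2 : ∀ h : M →ₗ[K] ↥νH, h ∈ H2 →
      ∀ (a : A) (m : M), ((h (a • m) : ↥HB)) = ρ a ↑(h m) := by
    intro h hh
    rw [← SetLike.mem_coe, hH2] at hh
    exact hh
  have memH2' : ∀ h : M →ₗ[K] ↥νH,
      (∀ (a : A) (m : M), ((h (a • m) : ↥HB)) = ρ a ↑(h m)) → h ∈ H2 := by
    intro h hh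
    rw [← SetLike.mem_coe, hH2]
    exact hh
  -- relation in the quotient
  have qeq : ∀ (x y : ↥νL) (a : A) (m : M), (y : L) = rmul (K := K) (x : L) a →
      (Submodule.Quotient.mk (y ⊗ₜ[K] m) : (↥νL ⊗[K] M) ⧸ R) =
        Submodule.Quotient.mk (x ⊗ₜ[K] (a • m)) := by
    intro x y a m hy
    rw [Submodule.Quotient.eq, hR]
    exact Submodule.subset_span ⟨x, y, a, m, hy, rfl⟩
  -- forward direction: building g_{F,m}
  let gF : (((↥νL ⊗[K] M) ⧸ R) →ₗ[K] N) → M → (↥νL →ₗ[K] N) :=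
    fun F m => F ∘ₗ R.mkQ ∘ₗ ((TensorProduct.mk K ↥νL M).flip m)
  have gF_apply : ∀ F m x, gF F m x = F (Submodule.Quotient.mk (x ⊗ₜ[K] m)) :=
    fun _ _ _ => rfl
  have gF_memHB : ∀ F, F ∈ H1 → ∀ m, gF F m ∈ HB := by
    intro F hF m
    apply memHB'
    intro b x y hy
    rw [gF_apply, gF_apply, ← hβ b x y m hy, memH1 F hF]
  have gF_memνH : ∀ F (hF : F ∈ H1) (m : M),
      (⟨gF F m, gF_memHB F hF m⟩ : ↥HB) ∈ νH := by
    intro F hF m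
    rw [← SetLike.mem_coe, hνH]
    obtain ⟨e, he, hem⟩ := hM m
    refine ⟨e, he, ?_⟩
    apply Subtype.ext
    apply LinearMap.ext
    intro x
    have hx : ((⟨rmul (K := K) (x : L) e, hνLr e (x : L) x.2⟩ : ↥νL) : L) =
        rmul (K := K) (x : L) e := rfl
    rw [hρ e _ x ⟨rmul (K := K) (x : L) e, hνLr e (x : L) x.2⟩ hx]
    show gF F m _ = gF F m x
    rw [gF_apply, gF_apply, qeq x _ e m hx, hem]
  -- the forward map Φ₀
  have ΦFlin : ∀ F : ↥H1, ∃ h : M →ₗ[K] ↥νH, h ∈ H2 ∧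
      ∀ (m : M) (x : ↥νL), (((h m : ↥HB) : ↥νL →ₗ[K] N)) x =
        F.1 (Submodule.Quotient.mk (x ⊗ₜ[K] m)) := by
    intro F
    refine ⟨{ toFun := fun m => ⟨⟨gF F.1 m, gF_memHB F.1 F.2 m⟩, gF_memνH F.1 F.2 m⟩
              map_add' := ?_
              map_smul' := ?_ }, ?_, ?_⟩
    · intro m m'
      apply Subtype.ext
      apply Subtype.ext
      apply LinearMap.ext
      intro x
      show gF F.1 (m + m') x = gF F.1 m x + gF F.1 m' x
      rw [gF_apply, gF_apply, gF_apply, TensorProduct.tmul_add,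
        Submodule.Quotient.mk_add, map_add]
    · intro k m
      apply Subtype.ext
      apply Subtype.ext
      apply LinearMap.ext
      intro x
      show gF F.1 (k • m) x = k • gF F.1 m x
      rw [gF_apply, gF_apply, TensorProduct.tmul_smul, Submodule.Quotient.mk_smul,
        map_smul]
    · apply memH2'
      intro a m
      apply Subtype.ext
      apply LinearMap.ext
      intro x
      have hx : ((⟨rmul (K := K) (x : L) a, hνLr a (x : L) x.2⟩ : ↥νL) : L) =
          rmul (K := K) (x : L) a := rfl
      rw [hρ a _ x ⟨rmul (K := K) (x : L) a, hνLr a (x : L) x.2⟩ hx]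
      show gF F.1 (a • m) x = gF F.1 m _
      rw [gF_apply, gF_apply, qeq x _ a m hx]
    · intro m x
      rfl
  choose Φ₀ hΦ₀mem hΦ₀apply using ΦFlin
  -- inverse direction
  let bil : ↥H2 → (↥νL →ₗ[K] M →ₗ[K] N) := fun h =>
    { toFun := fun x =>
        { toFun := fun m => (((h.1 m : ↥HB) : ↥νL →ₗ[K] N)) x
          map_add' := by
            intro m m'
            simp only [map_add, Submodule.coe_add, LinearMap.add_apply]
          map_smul' := by
            intro k m
            simp only [map_smul, SetLike.val_smul, LinearMap.smul_apply,
              RingHom.id_apply] }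
      map_add' := by
        intro x x'
        apply LinearMap.ext
        intro m
        exact map_add (((h.1 m : ↥HB) : ↥νL →ₗ[K] N)) x x'
      map_smul' := by
        intro k x
        apply LinearMap.ext
        intro m
        exact map_smul (((h.1 m : ↥HB) : ↥νL →ₗ[K] N)) k x }
  have bil_apply : ∀ (h : ↥H2) (x : ↥νL) (m : M),
      bil h x m = (((h.1 m : ↥HB) : ↥νL →ₗ[K] N)) x := fun _ _ _ => rfl
  have hker : ∀ h : ↥H2, R ≤ LinearMap.ker (TensorProduct.lift (bil h)) := by
    intro h
    rw [hR, Submodule.span_le]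
    rintro z ⟨x, y, a, m, hy, rfl⟩
    simp only [SetLike.mem_coe, LinearMap.mem_ker, map_sub, TensorProduct.lift.tmul]
    rw [bil_apply, bil_apply, memH2 h.1 h.2 a m, hρ a _ x y hy, sub_self]
  let Ψ₀ : ↥H2 → (((↥νL ⊗[K] M) ⧸ R) →ₗ[K] N) :=
    fun h => R.liftQ (TensorProduct.lift (bil h)) (hker h)
  have Ψ₀_apply : ∀ (h : ↥H2) (x : ↥νL) (m : M),
      Ψ₀ h (Submodule.Quotient.mk (x ⊗ₜ[K] m)) = (((h.1 m : ↥HB) : ↥νL →ₗ[K] N)) x :=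
    fun _ _ _ => rfl
  have Ψ₀mem : ∀ h : ↥H2, Ψ₀ h ∈ H1 := by
    intro h
    apply memH1'
    intro b t
    obtain ⟨z, rfl⟩ := Submodule.Quotient.mk_surjective R t
    induction z using TensorProduct.induction_on with
    | zero =>
        rw [Submodule.Quotient.mk_zero, map_zero, map_zero]
        exact (asmul_zero K B b).symm
    | tmul x m =>
        have hy : ((⟨b • (x : L), hνLl b (x : L) x.2⟩ : ↥νL) : L) = b • (x : L) := rfl
        rw [hβ b x _ m hy, Ψ₀_apply, Ψ₀_apply]
        exact memHB _ (h.1 m : ↥HB).2 b x _ hy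
    | add z w hz hw =>
        rw [Submodule.Quotient.mk_add, map_add, map_add, hz, hw, map_add,
          NUMod.asmul_add]
  -- assemble the equivalence
  refine ⟨{ toFun := fun F => ⟨Φ₀ F, hΦ₀mem F⟩
            invFun := fun h => ⟨Ψ₀ h, Ψ₀mem h⟩
            map_add' := ?_
            map_smul' := ?_
            left_inv := ?_
            right_inv := ?_ }, ?_⟩
  · intro F F'
    apply Subtype.ext
    apply LinearMap.ext
    intro m
    apply Subtype.ext
    apply Subtype.ext
    apply LinearMap.ext
    intro x
    have h1 : (((Φ₀ (F + F') m : ↥HB) : ↥νL →ₗ[K] N)) x =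
        (F + F').1 (Submodule.Quotient.mk (x ⊗ₜ[K] m)) := hΦ₀apply (F + F') m x
    have h2 := hΦ₀apply F m x
    have h3 := hΦ₀apply F' m x
    show (((Φ₀ (F + F') m : ↥HB) : ↥νL →ₗ[K] N)) x =
        (((Φ₀ F m : ↥HB) : ↥νL →ₗ[K] N)) x + (((Φ₀ F' m : ↥HB) : ↥νL →ₗ[K] N)) x
    rw [h1, h2, h3]
    rfl
  · intro k F
    apply Subtype.ext
    apply LinearMap.ext
    intro m
    apply Subtype.ext
    apply Subtype.ext
    apply LinearMap.ext
    intro x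
    have h1 : (((Φ₀ (k • F) m : ↥HB) : ↥νL →ₗ[K] N)) x =
        (k • F).1 (Submodule.Quotient.mk (x ⊗ₜ[K] m)) := hΦ₀apply (k • F) m x
    have h2 := hΦ₀apply F m x
    show (((Φ₀ (k • F) m : ↥HB) : ↥νL →ₗ[K] N)) x =
        k • (((Φ₀ F m : ↥HB) : ↥νL →ₗ[K] N)) x
    rw [h1, h2]
    rfl
  · intro F
    apply Subtype.ext
    apply Submodule.linearMap_qext
    apply TensorProduct.ext'
    intro x m
    show Ψ₀ ⟨Φ₀ F, hΦ₀mem F⟩ (Submodule.Quotient.mk (x ⊗ₜ[K] m)) =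
      F.1 (Submodule.Quotient.mk (x ⊗ₜ[K] m))
    rw [Ψ₀_apply]
    exact hΦ₀apply F m x
  · intro h
    apply Subtype.ext
    apply LinearMap.ext
    intro m
    apply Subtype.ext
    apply Subtype.ext
    apply LinearMap.ext
    intro x
    have h1 := hΦ₀apply ⟨Ψ₀ h, Ψ₀mem h⟩ m x
    show (((Φ₀ ⟨Ψ₀ h, Ψ₀mem h⟩ m : ↥HB) : ↥νL →ₗ[K] N)) x =
      (((h.1 m : ↥HB) : ↥νL →ₗ[K] N)) x
    rw [h1]
    exact Ψ₀_apply h x m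
  · intro F m x
    exact hΦ₀apply F m x
end

section
/- Let φ : A → B be a morphism of idempotented algebras, M a non-degenerate left A-module, N a non-degenerate left B-module. Then Hom_B(B ⊗_A M, N) ≅ Hom_A(M, ν_A(N)) naturally, i.e. the functor B ⊗_A (−) from non-degenerate A-modules to non-degenerate B-modules is left adjoint to ν_A restriction. -/
open scoped TensorProduct

set_option linter.unusedSectionVars false

universe u

/-- for a morphism `φ : A → B` of idempotented algebras, a non-degenerate
left `A`-module `M` and a non-degenerate left `B`-module `N`, there is a natural
`K`-module isomorphism `Hom_B(B ⊗_A M, N) ≅ Hom_A(M, ν_A(N))`, i.e. `B ⊗_A (−)` is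
left adjoint to `ν_A` restriction.  Here `B ⊗_A M` is the quotient of `B ⊗_K M` by the
balancing relations `R` (with `A` acting on `B` through `φ`), `β` is the `B`-action on
it, and `ν_A(N)` is the submodule of elements of `N` fixed by `φ(e)` for some
idempotent `e` of `A`.  The adjunction sends `F` to `m ↦ F(φ(e) ⊗ m)` for any
idempotent `e` fixing `m`. -/
theorem extension_restriction_adjunction
    {K A B : Type u} [CommRing K]
    [NonUnitalRing A] [Module K A] [SMulCommClass K A A] [IsScalarTower K A A]
    [NonUnitalRing B] [Module K B] [SMulCommClass K B B] [IsScalarTower K B B]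
    (hA : Idempotented A) (hB : Idempotented B)
    (φ : A →ₙₐ[K] B)
    (M : Type u) [AddCommGroup M] [Module K M] [NUMod K A M] (hM : Nondeg K A M)
    (N : Type u) [AddCommGroup N] [Module K N] [NUMod K B N] (hN : Nondeg K B N)
    -- B ⊗_A M as a quotient of B ⊗_K M
    (R : Submodule K (B ⊗[K] M))
    (hR : R = Submodule.span K {z : B ⊗[K] M | ∃ (b : B) (a : A) (m : M),
      z = (b * φ a) ⊗ₜ[K] m - b ⊗ₜ[K] (a • m)})
    -- the B-action on B ⊗_A M
    (β : B → ((B ⊗[K] M) ⧸ R) →ₗ[K] ((B ⊗[K] M) ⧸ R))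
    (hβ : ∀ (b' b : B) (m : M),
      β b' (Submodule.Quotient.mk (b ⊗ₜ[K] m)) = Submodule.Quotient.mk ((b' * b) ⊗ₜ[K] m))
    -- ν_A(N), where N is an A-module via φ
    (νN : Submodule K N)
    (hνN : (νN : Set N) = {n : N | ∃ e : A, e * e = e ∧ φ e • n = n})
    -- Hom_B(B ⊗_A M, N)
    (H1 : Submodule K (((B ⊗[K] M) ⧸ R) →ₗ[K] N))
    (hH1 : (H1 : Set (((B ⊗[K] M) ⧸ R) →ₗ[K] N)) =
      {F | ∀ (b : B) (t : (B ⊗[K] M) ⧸ R), F (β b t) = b • F t})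
    -- Hom_A(M, ν_A(N))
    (H2 : Submodule K (M →ₗ[K] ↥νN))
    (hH2 : (H2 : Set (M →ₗ[K] ↥νN)) =
      {h | ∀ (a : A) (m : M), ((h (a • m) : N)) = φ a • ((h m : N))}) :
    ∃ Φ : ↥H1 ≃ₗ[K] ↥H2,
      ∀ (F : ↥H1) (m : M) (e : A), e * e = e → e • m = m →
        ((((Φ F : M →ₗ[K] ↥νN)) m : N)) =
          ((F : ((B ⊗[K] M) ⧸ R) →ₗ[K] N)) (Submodule.Quotient.mk ((φ e) ⊗ₜ[K] m)) := by
  classical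
  obtain ⟨hA1, hA2⟩ := hA
  -- basic relation in the quotient
  have rel : ∀ (b : B) (a : A) (m : M),
      (Submodule.Quotient.mk ((b * φ a) ⊗ₜ[K] m) : (B ⊗[K] M) ⧸ R) =
        Submodule.Quotient.mk (b ⊗ₜ[K] (a • m)) := by
    intro b a m
    rw [Submodule.Quotient.eq, hR]
    exact Submodule.subset_span ⟨b, a, m, rfl⟩
  have fixmul : ∀ (m : M) (e f : A), e • m = m → f * e = e → f • m = m := by
    intro m e f hem hfe
    calc f • m = f • (e • m) := by rw [hem]
      _ = (f * e) • m := (NUMod.mul_asmul f e m).symm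
      _ = m := by rw [hfe, hem]
  have key : ∀ (m : M) (e e' : A), e * e = e → e • m = m → e' * e' = e' → e' • m = m →
      (Submodule.Quotient.mk (φ e ⊗ₜ[K] m) : (B ⊗[K] M) ⧸ R) =
        Submodule.Quotient.mk (φ e' ⊗ₜ[K] m) := by
    intro m e e' he hem he' he'm
    obtain ⟨E0, hE0, hE0e, _, hE0e', _⟩ := hA2 e e' he he'
    have step : ∀ f : A, f • m = m → E0 * f = f →
        (Submodule.Quotient.mk (φ f ⊗ₜ[K] m) : (B ⊗[K] M) ⧸ R) =
          Submodule.Quotient.mk (φ E0 ⊗ₜ[K] m) := by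
      intro f hfm hEf
      have h1 := rel (φ E0) f m
      rw [← map_mul, hEf, hfm] at h1
      exact h1
    rw [step e hem hE0e, step e' he'm hE0e']
  -- H1 membership unfolded
  have hF' : ∀ F : ↥H1, ∀ (b : B) (t : (B ⊗[K] M) ⧸ R),
      (F : ((B ⊗[K] M) ⧸ R) →ₗ[K] N) (β b t) = b • (F : ((B ⊗[K] M) ⧸ R) →ₗ[K] N) t := by
    intro F
    have h1 : (F : ((B ⊗[K] M) ⧸ R) →ₗ[K] N) ∈ (H1 : Set _) := F.2
    rw [hH1] at h1
    exact h1
  have hH2' : ∀ h : ↥H2, ∀ (a : A) (m : M),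
      (((h : M →ₗ[K] ↥νN) (a • m) : N)) = φ a • (((h : M →ₗ[K] ↥νN) m : N)) := by
    intro h
    have h1 : (h : M →ₗ[K] ↥νN) ∈ (H2 : Set _) := h.2
    rw [hH2] at h1
    exact h1
  have memν : ∀ (F : ↥H1) (m : M) (e : A), e * e = e → e • m = m →
      (F : ((B ⊗[K] M) ⧸ R) →ₗ[K] N) (Submodule.Quotient.mk (φ e ⊗ₜ[K] m)) ∈ νN := by
    intro F m e he hem
    rw [← SetLike.mem_coe, hνN]
    refine ⟨e, he, ?_⟩
    have h1 := hF' F (φ e) (Submodule.Quotient.mk (φ e ⊗ₜ[K] m))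
    rw [hβ, ← map_mul, he] at h1
    exact h1.symm
  -- the forward assignment
  let T : ↥H1 → M → N := fun F m =>
    (F : ((B ⊗[K] M) ⧸ R) →ₗ[K] N) (Submodule.Quotient.mk (φ ((hM m).choose) ⊗ₜ[K] m))
  have Tspec : ∀ (F : ↥H1) (m : M) (e : A), e * e = e → e • m = m →
      T F m = (F : ((B ⊗[K] M) ⧸ R) →ₗ[K] N) (Submodule.Quotient.mk (φ e ⊗ₜ[K] m)) := by
    intro F m e he hem
    exact congrArg _ (key m _ e (hM m).choose_spec.1 (hM m).choose_spec.2 he hem)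
  have Tmem : ∀ (F : ↥H1) (m : M), T F m ∈ νN := fun F m =>
    memν F m _ (hM m).choose_spec.1 (hM m).choose_spec.2
  have Tadd : ∀ (F : ↥H1) (m n : M), T F (m + n) = T F m + T F n := by
    intro F m n
    obtain ⟨e, he, hem⟩ := hM m
    obtain ⟨f, hf, hfn⟩ := hM n
    obtain ⟨E0, hE0, hE0e, _, hE0f, _⟩ := hA2 e f he hf
    have hm : E0 • m = m := fixmul m e E0 hem hE0e
    have hn : E0 • n = n := fixmul n f E0 hfn hE0f
    have hmn : E0 • (m + n) = m + n := by rw [NUMod.asmul_add, hm, hn]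
    rw [Tspec F (m + n) E0 hE0 hmn, Tspec F m E0 hE0 hm, Tspec F n E0 hE0 hn,
      TensorProduct.tmul_add, Submodule.Quotient.mk_add, map_add]
  have Tsmul : ∀ (F : ↥H1) (k : K) (m : M), T F (k • m) = k • T F m := by
    intro F k m
    obtain ⟨e, he, hem⟩ := hM m
    have hkm : e • (k • m) = k • m := by rw [NUMod.asmul_ksmul, hem]
    rw [Tspec F (k • m) e he hkm, Tspec F m e he hem, TensorProduct.tmul_smul,
      Submodule.Quotient.mk_smul, map_smul]
  have TA : ∀ (F : ↥H1) (a : A) (m : M), T F (a • m) = φ a • T F m := by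
    intro F a m
    obtain ⟨e, he, hem⟩ := hM m
    obtain ⟨f, hf, hfa, _⟩ := hA1 a
    have hfam : f • (a • m) = a • m := by rw [← NUMod.mul_asmul, hfa]
    rw [Tspec F (a • m) f hf hfam, Tspec F m e he hem]
    have l1 : (Submodule.Quotient.mk (φ f ⊗ₜ[K] (a • m)) : (B ⊗[K] M) ⧸ R)
        = Submodule.Quotient.mk (φ a ⊗ₜ[K] m) := by
      rw [← rel (φ f) a m, ← map_mul, hfa]
    have l2 : (Submodule.Quotient.mk (φ a ⊗ₜ[K] m) : (B ⊗[K] M) ⧸ R)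
        = β (φ a) (Submodule.Quotient.mk (φ e ⊗ₜ[K] m)) := by
      rw [hβ, rel (φ a) e m, hem]
    rw [l1, l2, hF' F]
  let Φ0 : ↥H1 → ↥H2 := fun F =>
    ⟨{ toFun := fun m => ⟨T F m, Tmem F m⟩
       map_add' := fun m n => Subtype.ext (Tadd F m n)
       map_smul' := fun k m => Subtype.ext (by simpa using Tsmul F k m) }, by
      rw [← SetLike.mem_coe, hH2]
      intro a m
      exact TA F a m⟩
  -- the backward assignment
  let bil : (M →ₗ[K] ↥νN) → (B →ₗ[K] M →ₗ[K] N) := fun h =>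
    { toFun := fun b =>
        { toFun := fun m => b • ((h m : N))
          map_add' := by
            intro m n
            show b • ((h (m + n) : N)) = b • ((h m : N)) + b • ((h n : N))
            rw [map_add, Submodule.coe_add]
            exact NUMod.asmul_add b _ _
          map_smul' := by
            intro k m
            show b • ((h (k • m) : N)) = (RingHom.id K) k • (b • ((h m : N)))
            rw [map_smul, SetLike.val_smul]
            simpa using NUMod.asmul_ksmul k b ((h m : N)) }
      map_add' := by
        intro b b'
        ext m
        exact NUMod.add_asmul b b' _
      map_smul' := by
        intro k b
        ext m
        simpa using NUMod.ksmul_asmul k b ((h m : N)) }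
  have bil_apply : ∀ (h : M →ₗ[K] ↥νN) (b : B) (m : M), bil h b m = b • ((h m : N)) :=
    fun _ _ _ => rfl
  have hker : ∀ h : ↥H2, R ≤ LinearMap.ker (TensorProduct.lift (bil (h : M →ₗ[K] ↥νN))) := by
    intro h
    rw [hR, Submodule.span_le]
    rintro z ⟨b, a, m, rfl⟩
    simp only [SetLike.mem_coe, LinearMap.mem_ker, map_sub, TensorProduct.lift.tmul]
    rw [bil_apply, bil_apply, hH2' h a m, ← NUMod.mul_asmul, sub_self]
  let Ψ0 : ↥H2 → ↥H1 := fun h =>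
    ⟨Submodule.liftQ R (TensorProduct.lift (bil (h : M →ₗ[K] ↥νN))) (hker h), by
      rw [← SetLike.mem_coe, hH1]
      intro b t
      obtain ⟨z, rfl⟩ := Submodule.Quotient.mk_surjective R t
      induction z using TensorProduct.induction_on with
      | zero =>
          rw [Submodule.Quotient.mk_zero, map_zero, map_zero]
          exact (asmul_zero K B b).symm
      | tmul b' m =>
          rw [hβ, Submodule.liftQ_apply, Submodule.liftQ_apply, TensorProduct.lift.tmul,
            TensorProduct.lift.tmul, bil_apply, bil_apply]
          exact NUMod.mul_asmul b b' _
      | add x y hx hy =>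
          rw [Submodule.Quotient.mk_add, map_add, map_add, hx, hy, map_add,
            NUMod.asmul_add]⟩
  have Ψspec : ∀ (h : ↥H2) (b : B) (m : M),
      ((Ψ0 h : ((B ⊗[K] M) ⧸ R) →ₗ[K] N)) (Submodule.Quotient.mk (b ⊗ₜ[K] m))
        = b • (((h : M →ₗ[K] ↥νN) m : N)) := by
    intro h b m
    show Submodule.liftQ R (TensorProduct.lift (bil (h : M →ₗ[K] ↥νN))) (hker h)
      (Submodule.Quotient.mk (b ⊗ₜ[K] m)) = _
    rw [Submodule.liftQ_apply, TensorProduct.lift.tmul, bil_apply]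
  refine ⟨{ toFun := Φ0
            map_add' := ?_
            map_smul' := ?_
            invFun := Ψ0
            left_inv := ?_
            right_inv := ?_ }, ?_⟩
  · intro F G
    refine Subtype.ext (LinearMap.ext fun m => Subtype.ext ?_)
    show T (F + G) m = T F m + T G m
    show ((F + G : ↥H1) : ((B ⊗[K] M) ⧸ R) →ₗ[K] N) _ = _
    rw [Submodule.coe_add, LinearMap.add_apply]
  · intro k F
    refine Subtype.ext (LinearMap.ext fun m => Subtype.ext ?_)
    show T (k • F) m = k • T F m
    show ((k • F : ↥H1) : ((B ⊗[K] M) ⧸ R) →ₗ[K] N) _ = _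
    rw [Submodule.coe_smul, LinearMap.smul_apply]
  · intro F
    refine Subtype.ext (Submodule.linearMap_qext R (TensorProduct.ext' fun b m => ?_))
    obtain ⟨e, he, hem⟩ := hM m
    show (Ψ0 (Φ0 F) : ((B ⊗[K] M) ⧸ R) →ₗ[K] N) (Submodule.Quotient.mk (b ⊗ₜ[K] m))
      = (F : ((B ⊗[K] M) ⧸ R) →ₗ[K] N) (Submodule.Quotient.mk (b ⊗ₜ[K] m))
    rw [Ψspec]
    show b • T F m = _
    rw [Tspec F m e he hem, ← hF' F b, hβ, rel b e m, hem]
  · intro h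
    refine Subtype.ext (LinearMap.ext fun m => Subtype.ext ?_)
    obtain ⟨e, he, hem⟩ := hM m
    show T (Ψ0 h) m = (((h : M →ₗ[K] ↥νN) m : N))
    rw [Tspec (Ψ0 h) m e he hem, Ψspec h (φ e) m, ← hH2' h e m, hem]
  · intro F m e he hem
    exact Tspec F m e he hem
end

section
/- Let A be an idempotented algebra. Then ⊕_{e ∈ A_idm} Ae (the direct sum of the modules Ae over all idempotents e of A) is a projective generator of the category of non-degenerate left A-modules: it is projective, and any non-degenerate module M with Hom_A(⊕_e Ae, M) = 0 is zero. -/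
open scoped TensorProduct

set_option linter.unusedSectionVars false

universe u

section Aux

open scoped DirectSum

variable {K A : Type u} [CommRing K] [NonUnitalRing A] [Module K A]
  [SMulCommClass K A A] [IsScalarTower K A A] [DecidableEq A]

/-- The `A`-action on a module as a `K`-linear map. -/
def asmulLin {M : Type u} [AddCommGroup M] [Module K M] [NUMod K A M] (a : A) :
    M →ₗ[K] M where
  toFun m := a • m
  map_add' := NUMod.asmul_add a
  map_smul' k m := NUMod.asmul_ksmul k a m

lemma mem_leftIdeal_self (e : A) (he : e * e = e) : e ∈ leftIdeal K e := ⟨e, he⟩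

lemma mul_mem_leftIdeal {e : A} (a : A) {x : A} (hx : x ∈ leftIdeal K e) :
    a * x ∈ leftIdeal K e := by
  obtain ⟨b, rfl⟩ := hx
  exact ⟨a * b, mul_assoc a b e⟩

lemma leftIdeal_mul_self {e : A} (he : e * e = e) {x : A} (hx : x ∈ leftIdeal K e) :
    x * e = x := by
  obtain ⟨b, rfl⟩ := hx
  rw [mul_assoc, he]

/-- The `K`-linear map `⊕_e Ae → M` determined by a family of vectors `v e ∈ M`,
sending `x ∈ Ae` to `x • v e`. -/
def liftMap {M : Type u} [AddCommGroup M] [Module K M] [NUMod K A M]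
    (v : {e : A // e * e = e} → M) :
    (⨁ e : {e : A // e * e = e}, ↥(leftIdeal K e.1)) →ₗ[K] M :=
  DirectSum.toModule K _ M (fun i =>
    { toFun := fun x => (x : A) • v i
      map_add' := fun x y => NUMod.add_asmul (x : A) (y : A) (v i)
      map_smul' := fun k x => NUMod.ksmul_asmul k (x : A) (v i) })

lemma liftMap_of {M : Type u} [AddCommGroup M] [Module K M] [NUMod K A M]
    (v : {e : A // e * e = e} → M) (i : {e : A // e * e = e})
    (x : ↥(leftIdeal K i.1)) :
    liftMap v (DirectSum.of (fun e : {e : A // e * e = e} => ↥(leftIdeal K e.1)) i x)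
      = (x : A) • v i := by
  unfold liftMap
  exact DirectSum.toModule_lof (R := K) (ι := {e : A // e * e = e})
    (M := fun e => ↥(leftIdeal K e.1)) (N := M)
    (φ := fun i =>
      { toFun := fun x => (x : A) • v i
        map_add' := fun x y => NUMod.add_asmul (x : A) (y : A) (v i)
        map_smul' := fun k x => NUMod.ksmul_asmul k (x : A) (v i) }) i x

lemma liftMap_sigma {M : Type u} [AddCommGroup M] [Module K M] [NUMod K A M]
    (σ : A → (⨁ e : {e : A // e * e = e}, ↥(leftIdeal K e.1)) →ₗ[K]
             (⨁ e : {e : A // e * e = e}, ↥(leftIdeal K e.1)))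
    (hσ : ∀ (a : A) (i : {e : A // e * e = e}) (x y : ↥(leftIdeal K i.1)),
      (y : A) = a * (x : A) →
      σ a (DirectSum.of (fun e : {e : A // e * e = e} => ↥(leftIdeal K e.1)) i x) =
        DirectSum.of (fun e : {e : A // e * e = e} => ↥(leftIdeal K e.1)) i y)
    (v : {e : A // e * e = e} → M) (a : A)
    (p : ⨁ e : {e : A // e * e = e}, ↥(leftIdeal K e.1)) :
    liftMap v (σ a p) = a • liftMap v p := by
  have h : liftMap v ∘ₗ σ a = (asmulLin a : M →ₗ[K] M) ∘ₗ liftMap v := by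
    apply DirectSum.linearMap_ext
    intro i
    ext x
    have hmem : a * (x : A) ∈ leftIdeal K i.1 := mul_mem_leftIdeal a x.2
    simp only [LinearMap.coe_comp, Function.comp_apply, DirectSum.lof_eq_of K]
    rw [hσ a i x ⟨a * (x : A), hmem⟩ rfl, liftMap_of, liftMap_of]
    exact NUMod.mul_asmul a (x : A) (v i)
  exact LinearMap.congr_fun h p

end Aux

open DirectSum in
/-- for an idempotented algebra `A`, the direct sum `P = ⊕_{e ∈ A_idm} Ae`
over all idempotents of `A` (with its natural `A`-action `σ`) is a projective generator
of the category of non-degenerate left `A`-modules: it satisfies the lifting property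
against all `A`-linear surjections of non-degenerate modules, and any non-degenerate
module admitting no nonzero `A`-linear map from `P` is zero. -/
theorem directSum_Ae_projective_generator
    {K A : Type u} [CommRing K] [NonUnitalRing A] [Module K A]
    [SMulCommClass K A A] [IsScalarTower K A A] [DecidableEq A]
    (hA : Idempotented A)
    -- the A-action on P = ⊕_{e idempotent} Ae
    (σ : A → (⨁ e : {e : A // e * e = e}, ↥(leftIdeal K e.1)) →ₗ[K]
             (⨁ e : {e : A // e * e = e}, ↥(leftIdeal K e.1)))
    (hσ : ∀ (a : A) (i : {e : A // e * e = e}) (x y : ↥(leftIdeal K i.1)),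
      (y : A) = a * (x : A) →
      σ a (DirectSum.of (fun e : {e : A // e * e = e} => ↥(leftIdeal K e.1)) i x) =
        DirectSum.of (fun e : {e : A // e * e = e} => ↥(leftIdeal K e.1)) i y) :
    -- P is projective in M(A)
    (∀ (X Y : Type u) [AddCommGroup X] [Module K X] [NUMod K A X]
        [AddCommGroup Y] [Module K Y] [NUMod K A Y],
      Nondeg K A X → Nondeg K A Y →
      ∀ f : X →ₗ[K] Y, IsAMap K A f → Function.Surjective f →
      ∀ g : (⨁ e : {e : A // e * e = e}, ↥(leftIdeal K e.1)) →ₗ[K] Y,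
        (∀ (a : A) (p : ⨁ e : {e : A // e * e = e}, ↥(leftIdeal K e.1)),
          g (σ a p) = a • g p) →
        ∃ h : (⨁ e : {e : A // e * e = e}, ↥(leftIdeal K e.1)) →ₗ[K] X,
          (∀ (a : A) (p : ⨁ e : {e : A // e * e = e}, ↥(leftIdeal K e.1)),
            h (σ a p) = a • h p) ∧ f ∘ₗ h = g) ∧
    -- P is a generator of M(A)
    (∀ (M : Type u) [AddCommGroup M] [Module K M] [NUMod K A M],
      Nondeg K A M →
      (∀ f : (⨁ e : {e : A // e * e = e}, ↥(leftIdeal K e.1)) →ₗ[K] M,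
        (∀ (a : A) (p : ⨁ e : {e : A // e * e = e}, ↥(leftIdeal K e.1)),
          f (σ a p) = a • f p) → f = 0) →
      ∀ m : M, m = 0) := by
  constructor
  · -- Projectivity
    intro X Y _ _ _ _ _ _ _ _ f hfA hfsurj g hgA
    -- choose preimages of g(e) for each idempotent e
    choose x hx using fun i : {e : A // e * e = e} =>
      hfsurj (g (DirectSum.of (fun e : {e : A // e * e = e} => ↥(leftIdeal K e.1)) i
        ⟨i.1, mem_leftIdeal_self i.1 i.2⟩))
    refine ⟨liftMap x, fun a p => liftMap_sigma σ hσ x a p, ?_⟩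
    apply DirectSum.linearMap_ext
    intro i
    ext z
    simp only [LinearMap.coe_comp, Function.comp_apply, DirectSum.lof_eq_of K]
    rw [liftMap_of, hfA, hx]
    have hz : (z : A) = (z : A) * i.1 := (leftIdeal_mul_self i.2 z.2).symm
    rw [← hσ (z : A) i ⟨i.1, mem_leftIdeal_self i.1 i.2⟩ z hz, hgA (z : A)]
  · -- Generator
    intro M _ _ _ hM hzero m
    obtain ⟨e, he, hem⟩ := hM m
    have hf : liftMap (K := K) (A := A) (M := M) (fun _ => m) = 0 :=
      hzero _ (fun a p => liftMap_sigma σ hσ _ a p)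
    have := liftMap_of (K := K) (A := A) (M := M) (fun _ => m) ⟨e, he⟩ ⟨e, mem_leftIdeal_self e he⟩
    rw [hf] at this
    simpa [hem] using this.symm
end

section
/- Let A be an idempotented algebra and e ∈ A an idempotent. For a non-degenerate left A-module M, every subquotient of M has a nonzero e-fixed element (i.e. e(H/K) ≠ 0 for all submodules K ⊊ H ≤ M) if and only if every simple subquotient of M has a nonzero e-fixed element. -/
open scoped TensorProduct

set_option linter.unusedSectionVars false

universe u

/-- for an idempotent `e` of an idempotented algebra `A` and a
non-degenerate left `A`-module `M`: every subquotient `H/Ksub` of `M` (for `A`-stable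
submodules `Ksub < H`) satisfies `e(H/Ksub) ≠ 0` if and only if every *simple* such
subquotient satisfies `e(H/Ksub) ≠ 0`.  (Here `e(H/Ksub) ≠ 0` is expressed as the
existence of `h ∈ H` with `e • h ∉ Ksub`.) -/
theorem subquotient_fixed_iff_simple_subquotient_fixed
    {K A : Type u} [CommRing K] [NonUnitalRing A] [Module K A]
    [SMulCommClass K A A] [IsScalarTower K A A]
    (hA : Idempotented A) (e : A) (he : e * e = e)
    (M : Type u) [AddCommGroup M] [Module K M] [NUMod K A M] (hM : Nondeg K A M) :
    (∀ Ksub H : Submodule K M, AStable K A Ksub → AStable K A H → Ksub < H →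
        ∃ h ∈ H, e • h ∉ Ksub) ↔
    (∀ Ksub H : Submodule K M, AStable K A Ksub → AStable K A H → Ksub < H →
        (∀ P : Submodule K M, AStable K A P → Ksub ≤ P → P ≤ H → P = Ksub ∨ P = H) →
        ∃ h ∈ H, e • h ∉ Ksub) := by
  constructor
  · intro h Ksub H hK hH hlt _
    exact h Ksub H hK hH hlt
  · intro hsimp Ksub H hK hH hlt
    by_contra hcon
    push_neg at hcon
    -- pick m ∈ H \ Ksub
    obtain ⟨m, hmH, hmK⟩ := SetLike.exists_of_lt hlt
    -- the A-stable submodule generated by m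
    set S : Submodule K M := Submodule.span K ({m} ∪ {x : M | ∃ a : A, a • m = x}) with hS
    have hSstable : AStable K A S := by
      intro a x hx
      refine Submodule.span_induction
        (p := fun x _ => a • x ∈ S) ?_ ?_ ?_ ?_ hx
      · rintro y (rfl | ⟨b, rfl⟩)
        · exact Submodule.subset_span (Or.inr ⟨a, rfl⟩)
        · rw [← NUMod.mul_asmul a b m]
          exact Submodule.subset_span (Or.inr ⟨a * b, rfl⟩)
      · show a • (0:M) ∈ S
        rw [asmul_zero K A a]; exact S.zero_mem
      · intro y z _ _ hy hz
        rw [NUMod.asmul_add a y z]; exact S.add_mem hy hz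
      · intro k y _ hy
        rw [NUMod.asmul_ksmul k a y]; exact S.smul_mem k hy
    have hmS : m ∈ S := Submodule.subset_span (Or.inl rfl)
    have hSH : S ≤ H := by
      rw [hS, Submodule.span_le]
      rintro x (rfl | ⟨a, rfl⟩)
      · exact hmH
      · exact hH a m hmH
    set N : Submodule K M := Ksub ⊔ S with hN
    have hNstable : AStable K A N := by
      intro a x hx
      rw [hN, Submodule.mem_sup] at hx ⊢
      obtain ⟨p, hp, s, hs, rfl⟩ := hx
      exact ⟨a • p, hK a p hp, a • s, hSstable a s hs, (NUMod.asmul_add a p s).symm⟩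
    have hNH : N ≤ H := sup_le hlt.le hSH
    have hKN : Ksub ≤ N := le_sup_left
    have hmN : m ∈ N := Submodule.mem_sup_right hmS
    -- Zorn: maximal A-stable submodule between Ksub and N not containing m
    set Z : Set (Submodule K M) :=
      {P | AStable K A P ∧ Ksub ≤ P ∧ P ≤ N ∧ m ∉ P} with hZ
    have hKZ : Ksub ∈ Z := ⟨hK, le_rfl, hKN, hmK⟩
    obtain ⟨P₀, -, hP₀Z, hP₀max⟩ := zorn_le_nonempty₀ Z (fun c hcZ hc y hy => by
      refine ⟨sSup c, ⟨?_, ?_, ?_, ?_⟩, fun z hz => le_sSup hz⟩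
      · intro a x hx
        rw [Submodule.mem_sSup_of_directed ⟨y, hy⟩ hc.directedOn] at hx ⊢
        obtain ⟨Q, hQ, hxQ⟩ := hx
        exact ⟨Q, hQ, (hcZ hQ).1 a x hxQ⟩
      · exact le_trans (hcZ hy).2.1 (le_sSup hy)
      · exact sSup_le fun Q hQ => (hcZ hQ).2.2.1
      · intro hm
        rw [Submodule.mem_sSup_of_directed ⟨y, hy⟩ hc.directedOn] at hm
        obtain ⟨Q, hQ, hmQ⟩ := hm
        exact (hcZ hQ).2.2.2 hmQ) Ksub hKZ
    obtain ⟨hP₀stable, hKP₀, hP₀N, hmP₀⟩ := hP₀Z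
    -- N/P₀ is a simple subquotient
    have hP₀lt : P₀ < N := lt_of_le_of_ne hP₀N (fun h => hmP₀ (h ▸ hmN))
    have hsimple : ∀ P : Submodule K M, AStable K A P → P₀ ≤ P → P ≤ N →
        P = P₀ ∨ P = N := by
      intro P hPst hP₀P hPN
      by_cases hmP : m ∈ P
      · right
        refine le_antisymm hPN (sup_le (hKP₀.trans hP₀P) ?_)
        rw [hS, Submodule.span_le]
        rintro x (rfl | ⟨a, rfl⟩)
        · exact hmP
        · exact hPst a m hmP
      · left
        exact le_antisymm (hP₀max ⟨hPst, hKP₀.trans hP₀P, hPN, hmP⟩ hP₀P) hP₀P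
    obtain ⟨h, hhN, hhP₀⟩ := hsimp P₀ N hP₀stable hNstable hP₀lt hsimple
    exact hhP₀ (hKP₀ (hcon h (hNH hhN)))
end

section
/- Let A be an idempotented algebra and e ∈ A a left special idempotent (i.e. the full subcategory {M non-degenerate | M = AeM} is closed under subquotients). Then for a non-degenerate A-module M, M = AeM if and only if every nonzero subquotient of M contains a nonzero e-fixed element. -/
open scoped TensorProduct

set_option linter.unusedSectionVars false

universe u

/-- if `e` is a left special idempotent of an idempotented algebra `A`,
then a non-degenerate `A`-module `M` satisfies `M = AeM` if and only if every nonzero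
subquotient of `M` (by `A`-stable submodules) contains a nonzero `e`-fixed element. -/
theorem generated_iff_subquotients_have_fixed_vectors
    {K A : Type u} [CommRing K] [NonUnitalRing A] [Module K A]
    [SMulCommClass K A A] [IsScalarTower K A A]
    (hA : Idempotented A) (e : A) (he : e * e = e) (hsp : LeftSpecial K A e)
    (M : Type u) [AddCommGroup M] [Module K M] [NUMod K A M] (hM : Nondeg K A M) :
    aeSpan K e M = ⊤ ↔
      ∀ Ksub H : Submodule K M, AStable K A Ksub → AStable K A H → Ksub < H →
        ∃ h ∈ H, h ∉ Ksub ∧ e • h - h ∈ Ksub := by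
  constructor
  · intro htop Ksub H hKs hHs hlt
    have hsub := hsp M hM htop Ksub H hKs hHs hlt.le
    by_cases hex : ∃ m ∈ H, e • m ∉ Ksub
    · obtain ⟨m, hmH, hm⟩ := hex
      refine ⟨e • m, hHs e m hmH, hm, ?_⟩
      have hee : e • (e • m) = e • m := by
        rw [← NUMod.mul_asmul (K := K), he]
      rw [hee, sub_self]
      exact Ksub.zero_mem
    · push_neg at hex
      exfalso
      have hle : H ≤ Ksub := by
        refine le_trans hsub ?_
        rw [sup_le_iff]
        refine ⟨le_refl _, Submodule.span_le.2 ?_⟩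
        rintro x ⟨a, m, hmH, rfl⟩
        exact hKs a _ (hex m hmH)
      exact hlt.not_ge hle
  · intro hfix
    by_contra hne
    have hst : AStable K A (aeSpan K e M) := by
      intro a m hm
      induction hm using Submodule.span_induction with
      | mem x hx =>
        obtain ⟨b, n, rfl⟩ := hx
        exact Submodule.subset_span ⟨a * b, n, NUMod.mul_asmul a b (e • n)⟩
      | zero => rw [asmul_zero K A]; exact Submodule.zero_mem _
      | add x y _ _ hx hy =>
        rw [NUMod.asmul_add]; exact Submodule.add_mem _ hx hy
      | smul k x _ hx =>
        rw [NUMod.asmul_ksmul]; exact Submodule.smul_mem _ k hx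
    obtain ⟨h, -, hn, hf⟩ := hfix (aeSpan K e M) ⊤ hst
      (fun a m _ => trivial) (lt_top_iff_ne_top.2 hne)
    have heh : e • h ∈ aeSpan K e M :=
      Submodule.subset_span ⟨e, h, by rw [← NUMod.mul_asmul (K := K), he]⟩
    have : h ∈ aeSpan K e M := by
      have := Submodule.sub_mem _ heh hf
      simpa using this
    exact hn this
end

section
/- Let A be an idempotented algebra and e ∈ A a left special idempotent. Then the assignment M ↦ AeM defines a functor Γ_e from non-degenerate A-modules to the subcategory M(A)_e = {M | M = AeM}, and Γ_e is right adjoint to the inclusion of M(A)_e into M(A): every A-linear map from M ∈ M(A)_e to N factors through AeN. -/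
open scoped TensorProduct

set_option linter.unusedSectionVars false

universe u

/-- for a left special idempotent `e` of an idempotented algebra `A`, the
assignment `M ↦ AeM` defines a functor `Γ_e` from non-degenerate `A`-modules into
`M(A)_e = {M | M = AeM}` (i.e. `AeN` is an `A`-submodule which is itself generated by
its `e`-fixed vectors), and `Γ_e` is right adjoint to the inclusion: every `A`-linear
map from a module `M` with `M = AeM` into `N` factors through `AeN`. -/
theorem gamma_right_adjoint
    {K A : Type u} [CommRing K] [NonUnitalRing A] [Module K A]
    [SMulCommClass K A A] [IsScalarTower K A A]
    (hA : Idempotented A) (e : A) (he : e * e = e) (hsp : LeftSpecial K A e)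
    (N : Type u) [AddCommGroup N] [Module K N] [NUMod K A N] (hN : Nondeg K A N) :
    AStable K A (aeSpan K e N) ∧
    (aeSpan K e N ≤
      Submodule.span K {x : N | ∃ a : A, ∃ m ∈ aeSpan K e N, a • (e • m) = x}) ∧
    (∀ (M : Type u) [AddCommGroup M] [Module K M] [NUMod K A M],
      Nondeg K A M → aeSpan K e M = ⊤ →
      ∀ f : M →ₗ[K] N, IsAMap K A f → LinearMap.range f ≤ aeSpan K e N) := by
  refine ⟨?_, ?_, ?_⟩
  · intro a m hm
    induction hm using Submodule.span_induction with
    | mem x hx =>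
      obtain ⟨b, n, rfl⟩ := hx
      exact Submodule.subset_span ⟨a * b, n, NUMod.mul_asmul a b (e • n)⟩
    | zero => rw [asmul_zero K A a]; exact Submodule.zero_mem _
    | add x y hx hy ihx ihy => rw [NUMod.asmul_add]; exact add_mem ihx ihy
    | smul k x hx ih => rw [NUMod.asmul_ksmul]; exact Submodule.smul_mem _ k ih
  · apply Submodule.span_le.mpr
    rintro x ⟨a, m, rfl⟩
    have hee : e • (e • m) = e • m := by rw [← NUMod.mul_asmul, he]
    apply Submodule.subset_span
    refine ⟨a, e • m, ?_, ?_⟩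
    · exact Submodule.subset_span ⟨e, m, hee⟩
    · rw [hee]
  · intro M _ _ _ hM htop f hf
    rintro x ⟨m, rfl⟩
    have hm : m ∈ aeSpan K e M := htop ▸ Submodule.mem_top
    induction hm using Submodule.span_induction with
    | mem x hx =>
      obtain ⟨a, n, rfl⟩ := hx
      rw [hf, hf]
      exact Submodule.subset_span ⟨a, f n, rfl⟩
    | zero => rw [map_zero]; exact Submodule.zero_mem _
    | add x y hx hy ihx ihy => rw [map_add]; exact add_mem ihx ihy
    | smul k x hx ih => rw [map_smul]; exact Submodule.smul_mem _ k ih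
end

section
/- Let A be an idempotented algebra and e ∈ A a left special and left split idempotent. Then for every non-degenerate A-module M, the short exact sequence 0 → AeM → M → M/AeM → 0 splits, so M ≅ AeM ⊕ M/AeM. Consequently the category of non-degenerate A-modules decomposes as the direct sum of M(A)_e = {M | M = AeM} and M(A)_e^⊥ = {M | eM = 0}. -/
open scoped TensorProduct

set_option linter.unusedSectionVars false

universe u

section Split

variable (K : Type u) [CommRing K]
variable (A : Type u) [NonUnitalRing A] [Module K A]
  [SMulCommClass K A A] [IsScalarTower K A A]

/-- `I` is an injective object of the full subcategory `M(A)_e` of non-degenerate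
modules generated by their `e`-fixed vectors. -/
def InjInClass (e : A) (I : Type u) [AddCommGroup I] [Module K I] [NUMod K A I] : Prop :=
  ∀ (X Y : Type u) [AddCommGroup X] [Module K X] [NUMod K A X]
      [AddCommGroup Y] [Module K Y] [NUMod K A Y],
    Nondeg K A X → aeSpan K e X = ⊤ → Nondeg K A Y → aeSpan K e Y = ⊤ →
    ∀ ι : X →ₗ[K] Y, IsAMap K A ι → Function.Injective ι →
    ∀ f : X →ₗ[K] I, IsAMap K A f → ∃ g : Y →ₗ[K] I, IsAMap K A g ∧ g ∘ₗ ι = f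

/-- `I` is an injective object of the category `M(A)` of non-degenerate modules. -/
def InjInCat (I : Type u) [AddCommGroup I] [Module K I] [NUMod K A I] : Prop :=
  ∀ (X Y : Type u) [AddCommGroup X] [Module K X] [NUMod K A X]
      [AddCommGroup Y] [Module K Y] [NUMod K A Y],
    Nondeg K A X → Nondeg K A Y →
    ∀ ι : X →ₗ[K] Y, IsAMap K A ι → Function.Injective ι →
    ∀ f : X →ₗ[K] I, IsAMap K A f → ∃ g : Y →ₗ[K] I, IsAMap K A g ∧ g ∘ₗ ι = f

/-- An idempotent `e` is left split if the inclusion `M(A)_e → M(A)` preserves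
injective objects. -/
def LeftSplit (e : A) : Prop :=
  ∀ (I : Type u) [AddCommGroup I] [Module K I] [NUMod K A I],
    Nondeg K A I → aeSpan K e I = ⊤ → InjInClass K A e I → InjInCat K A I

end Split

/-!
Embed `N = AeM` into a module `E` that is injective among all `A`-modules; such `E` exist
because `A`-modules are the same as modules over the unitization `K ⊕ A`. Then `AeE` is
injective in `M(A)_e`, hence in `M(A)` as `e` is left split, so the inclusion of `N` into `AeE`
extends to an `A`-map `g : M → AeE`. As `e` is left special, `g(M)` is spanned by the vectors
`a e g(m) = g(a e m)`, so `g(M) = g(N)`; since `g` is injective on `N`, this gives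
`M = N ⊕ ker g`. Finally `e c ∈ N ∩ ker g = 0` for `c ∈ ker g`.
-/

section

variable {K : Type u} [CommRing K] {A : Type u} [NonUnitalRing A] [Module K A]
  [SMulCommClass K A A] [IsScalarTower K A A]

section NonUnitalModule

variable {M N : Type u} [AddCommGroup M] [Module K M] [NUMod K A M]
  [AddCommGroup N] [Module K N] [NUMod K A N]

theorem zero_asmul (m : M) : (0 : A) • m = 0 :=
  add_eq_left (a := (0 : A) • m).mp (by rw [← NUMod.add_asmul, add_zero])

variable (K A) in
abbrev nuModOfAStable (S : Submodule K M) (hS : AStable K A S) : NUMod K A S where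
  smul a x := ⟨a • (x : M), hS a x x.2⟩
  asmul_add a x y := Subtype.ext (NUMod.asmul_add a (x : M) y)
  add_asmul a b x := Subtype.ext (NUMod.add_asmul a b (x : M))
  mul_asmul a b x := Subtype.ext (NUMod.mul_asmul a b (x : M))
  asmul_ksmul k a x := Subtype.ext (NUMod.asmul_ksmul k a (x : M))
  ksmul_asmul k a x := Subtype.ext (NUMod.ksmul_asmul k a (x : M))

theorem aStable_bot : AStable K A (⊥ : Submodule K M) := by
  intro a m hm
  rw [Submodule.mem_bot] at hm ⊢
  rw [hm, asmul_zero K A]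

theorem IsAMap.aStable_range {f : M →ₗ[K] N} (hf : IsAMap K A f) :
    AStable K A (LinearMap.range f) := by
  rintro a _ ⟨m, rfl⟩
  exact ⟨a • m, hf a m⟩

theorem IsAMap.aStable_ker {f : M →ₗ[K] N} (hf : IsAMap K A f) :
    AStable K A (LinearMap.ker f) := by
  intro a m hm
  rw [LinearMap.mem_ker] at hm ⊢
  rw [hf, hm, asmul_zero K A]

theorem aStable_aeSpan (e : A) : AStable K A (aeSpan K e M) := by
  intro a m hm
  induction hm using Submodule.span_induction with
  | mem x hx =>
    obtain ⟨b, n, rfl⟩ := hx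
    rw [← NUMod.mul_asmul]
    exact Submodule.subset_span ⟨a * b, n, rfl⟩
  | zero => rw [asmul_zero K A]; exact Submodule.zero_mem _
  | add x y _ _ hx hy => rw [NUMod.asmul_add]; exact Submodule.add_mem _ hx hy
  | smul k x _ hx => rw [NUMod.asmul_ksmul]; exact Submodule.smul_mem _ _ hx

instance (e : A) : NUMod K A (aeSpan K e M) := nuModOfAStable K A _ (aStable_aeSpan e)

@[simp]
theorem aeSpan.coe_asmul (e a : A) (x : aeSpan K e M) :
    ((a • x : aeSpan K e M) : M) = a • (x : M) :=
  rfl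

theorem isAMap_aeSpan_subtype (e : A) : IsAMap K A (aeSpan K e M).subtype := fun _ _ => rfl

theorem asmul_mem_aeSpan {e : A} (he : e * e = e) (m : M) : e • m ∈ aeSpan K e M :=
  Submodule.subset_span ⟨e, m, by rw [← NUMod.mul_asmul, he]⟩

theorem IsAMap.map_mem_aeSpan (e : A) {f : M →ₗ[K] N} (hf : IsAMap K A f) {m : M}
    (hm : m ∈ aeSpan K e M) : f m ∈ aeSpan K e N := by
  induction hm using Submodule.span_induction with
  | mem x hx =>
    obtain ⟨a, n, rfl⟩ := hx
    rw [hf, hf]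
    exact Submodule.subset_span ⟨a, f n, rfl⟩
  | zero => rw [map_zero]; exact Submodule.zero_mem _
  | add x y _ _ hx hy => rw [map_add]; exact Submodule.add_mem _ hx hy
  | smul k x _ hx => rw [map_smul]; exact Submodule.smul_mem _ _ hx

variable (K M) in
theorem aeSpan_aeSpan_eq_top {e : A} (he : e * e = e) : aeSpan K e (aeSpan K e M) = ⊤ := by
  have hmap : aeSpan K e M ≤ (aeSpan K e (aeSpan K e M)).map (aeSpan K e M).subtype := by
    refine Submodule.span_le.mpr ?_
    rintro _ ⟨a, m, rfl⟩
    refine ⟨a • e • ⟨e • m, asmul_mem_aeSpan he m⟩, Submodule.subset_span ⟨_, _, rfl⟩, ?_⟩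
    simp only [Submodule.subtype_apply, aeSpan.coe_asmul, ← NUMod.mul_asmul, mul_assoc, he]
  rw [eq_top_iff, ← Submodule.comap_subtype_self, ← Submodule.comap_map_eq_of_injective
    (aeSpan K e M).injective_subtype (aeSpan K e (aeSpan K e M))]
  exact Submodule.comap_mono hmap

theorem exists_idempotent_asmul_eq_of_mem_aeSpan (hA : Idempotented A) (e : A) {m : M}
    (hm : m ∈ aeSpan K e M) : ∃ f : A, f * f = f ∧ f • m = m := by
  induction hm using Submodule.span_induction with
  | mem x hx =>
    obtain ⟨b, n, rfl⟩ := hx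
    obtain ⟨f, hf, hfb, -⟩ := hA.1 b
    exact ⟨f, hf, by rw [← NUMod.mul_asmul, hfb]⟩
  | zero =>
    obtain ⟨f, hf, -⟩ := hA.1 0
    exact ⟨f, hf, asmul_zero K A f⟩
  | add x y _ _ hx hy =>
    obtain ⟨f₁, hf₁, hx⟩ := hx
    obtain ⟨f₂, hf₂, hy⟩ := hy
    obtain ⟨f, hf, hff₁, -, hff₂, -⟩ := hA.2 f₁ f₂ hf₁ hf₂
    refine ⟨f, hf, ?_⟩
    rw [NUMod.asmul_add, ← hx, ← hy, ← NUMod.mul_asmul, ← NUMod.mul_asmul, hff₁, hff₂]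
  | smul k x _ hx =>
    obtain ⟨f, hf, hx⟩ := hx
    exact ⟨f, hf, by rw [NUMod.asmul_ksmul, hx]⟩

variable (K M) in
theorem nondeg_aeSpan (hA : Idempotented A) (e : A) : Nondeg K A (aeSpan K e M) := fun m =>
  let ⟨f, hf, hfm⟩ := exists_idempotent_asmul_eq_of_mem_aeSpan hA e m.2
  ⟨f, hf, Subtype.ext hfm⟩

def IsAMap.codRestrictAeSpan {e : A} {f : M →ₗ[K] N} (hf : IsAMap K A f)
    (hM : aeSpan K e M = ⊤) : M →ₗ[K] aeSpan K e N :=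
  f.codRestrict _ fun _ => hf.map_mem_aeSpan e (hM ▸ Submodule.mem_top)

theorem IsAMap.isAMap_codRestrictAeSpan {e : A} {f : M →ₗ[K] N} (hf : IsAMap K A f)
    (hM : aeSpan K e M = ⊤) : IsAMap K A (hf.codRestrictAeSpan hM) :=
  fun a m => Subtype.ext (hf a m)

variable (K A) in
def unitizationAct (r : Unitization K A) (m : M) : M :=
  r.fst • m + r.snd • m

variable (K A M) in
abbrev unitizationModule : Module (Unitization K A) M :=
  letI : SMul (Unitization K A) M := ⟨unitizationAct K A⟩
  Module.ofMinimalAxioms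
    (fun r x y => by
      change unitizationAct K A r (x + y) = unitizationAct K A r x + unitizationAct K A r y
      simp only [unitizationAct, smul_add, NUMod.asmul_add]
      abel)
    (fun r s x => by
      change unitizationAct K A (r + s) x = unitizationAct K A r x + unitizationAct K A s x
      simp only [unitizationAct, Unitization.fst_add, Unitization.snd_add, add_smul,
        NUMod.add_asmul]
      abel)
    (fun r s x => by
      change unitizationAct K A (r * s) x = unitizationAct K A r (unitizationAct K A s x)
      simp only [unitizationAct, Unitization.fst_mul, Unitization.snd_mul, NUMod.add_asmul,
        NUMod.mul_asmul, NUMod.asmul_ksmul, NUMod.ksmul_asmul, mul_smul, smul_add,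
        NUMod.asmul_add]
      abel)
    (fun x => by
      change unitizationAct K A 1 x = x
      simp only [unitizationAct, Unitization.fst_one, Unitization.snd_one, one_smul,
        zero_asmul, add_zero])

theorem unitizationAct_algebraMap (k : K) (m : M) :
    unitizationAct K A (algebraMap K (Unitization K A) k) m = k • m := by
  simp [unitizationAct, Unitization.algebraMap_eq_inl, zero_asmul]

theorem unitizationAct_inr (a : A) (m : M) :
    unitizationAct K A (a : Unitization K A) m = a • m := by
  simp [unitizationAct]

theorem IsAMap.map_unitizationAct {f : M →ₗ[K] N} (hf : IsAMap K A f) (r : Unitization K A)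
    (m : M) : f (unitizationAct K A r m) = unitizationAct K A r (f m) := by
  rw [unitizationAct, unitizationAct, map_add, map_smul, hf]

end NonUnitalModule

section UnitizationModule

variable (K A) in
abbrev moduleOfUnitization (E : Type u) [AddCommGroup E] [Module (Unitization K A) E] :
    Module K E :=
  Module.compHom E (algebraMap K (Unitization K A))

variable (K A) in
abbrev nuModOfUnitization (E : Type u) [AddCommGroup E] [Module (Unitization K A) E] :
    letI := moduleOfUnitization K A E
    NUMod K A E :=
  letI := moduleOfUnitization K A E
  { smul := fun a x => (a : Unitization K A) • x
    asmul_add := fun a x y => smul_add _ x y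
    add_asmul := fun a b x => by
      change ((↑(a + b) : Unitization K A)) • x = _
      rw [Unitization.inr_add, add_smul]
      rfl
    mul_asmul := fun a b x => by
      change ((↑(a * b) : Unitization K A)) • x = _
      rw [Unitization.inr_mul, mul_smul]
      rfl
    asmul_ksmul := fun k a x => by
      change (↑a : Unitization K A) • (algebraMap K (Unitization K A) k • x) =
        algebraMap K (Unitization K A) k • ((↑a : Unitization K A) • x)
      rw [← mul_smul, ← mul_smul, Algebra.commutes]
    ksmul_asmul := fun k a x => by
      change ((↑(k • a) : Unitization K A)) • x =
        algebraMap K (Unitization K A) k • ((↑a : Unitization K A) • x)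
      rw [Unitization.inr_smul, Algebra.smul_def, mul_smul] }

variable {E : Type u} [AddCommGroup E] [Module (Unitization K A) E]

theorem unitizationAct_eq_smul (r : Unitization K A) (x : E) :
    letI := moduleOfUnitization K A E
    letI := nuModOfUnitization K A E
    unitizationAct K A r x = r • x := by
  conv_rhs => rw [← Unitization.inl_fst_add_inr_snd_eq r, add_smul]
  rfl

variable {Y : Type u} [AddCommGroup Y] [Module K Y] [NUMod K A Y]

def restrictScalarsOfUnitization
    (g : letI := unitizationModule K A Y; Y →ₗ[Unitization K A] E) :
    letI := moduleOfUnitization K A E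
    Y →ₗ[K] E :=
  letI := moduleOfUnitization K A E
  letI := unitizationModule K A Y
  { toFun := g
    map_add' := g.map_add
    map_smul' := fun k y => by
      rw [← unitizationAct_algebraMap (A := A) k y]
      exact g.map_smul _ y }

theorem isAMap_restrictScalarsOfUnitization
    (g : letI := unitizationModule K A Y; Y →ₗ[Unitization K A] E) :
    letI := moduleOfUnitization K A E
    letI := nuModOfUnitization K A E
    IsAMap K A (restrictScalarsOfUnitization g) := by
  let := unitizationModule K A Y
  intro a y
  rw [← unitizationAct_inr a y]
  exact g.map_smul _ y

end UnitizationModule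

variable (K A) in
def IsInjectiveNUMod (E : Type u) [AddCommGroup E] [Module K E] [NUMod K A E] : Prop :=
  ∀ (X Y : Type u) [AddCommGroup X] [Module K X] [NUMod K A X]
      [AddCommGroup Y] [Module K Y] [NUMod K A Y],
    ∀ ι : X →ₗ[K] Y, IsAMap K A ι → Function.Injective ι →
    ∀ f : X →ₗ[K] E, IsAMap K A f → ∃ g : Y →ₗ[K] E, IsAMap K A g ∧ g ∘ₗ ι = f

theorem isInjectiveNUMod_of_injective (E : Type u) [AddCommGroup E]
    [Module (Unitization K A) E] [Module.Injective (Unitization K A) E] :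
    letI := moduleOfUnitization K A E
    letI := nuModOfUnitization K A E
    IsInjectiveNUMod K A E := by
  let := moduleOfUnitization K A E
  let := nuModOfUnitization K A E
  intro X Y _ _ _ _ _ _ ι hι hιinj f hf
  let := unitizationModule K A X
  let := unitizationModule K A Y
  let ιU : X →ₗ[Unitization K A] Y :=
    { toAddHom := ι.toAddHom, map_smul' := hι.map_unitizationAct }
  let fU : X →ₗ[Unitization K A] E :=
    { toAddHom := f.toAddHom
      map_smul' := fun r x => (hf.map_unitizationAct r x).trans (unitizationAct_eq_smul r (f x)) }
  obtain ⟨gU, hgU⟩ := Module.Injective.out ιU hιinj fU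
  exact ⟨restrictScalarsOfUnitization gU, isAMap_restrictScalarsOfUnitization gU,
    LinearMap.ext hgU⟩

open CategoryTheory in
theorem exists_embedding_isInjectiveNUMod (N : Type u) [AddCommGroup N] [Module K N]
    [NUMod K A N] :
    ∃ (E : Type u) (_ : AddCommGroup E) (_ : Module K E) (_ : NUMod K A E) (j : N →ₗ[K] E),
      IsAMap K A j ∧ Function.Injective j ∧ IsInjectiveNUMod K A E := by
  let := unitizationModule K A N
  let N' := ModuleCat.of (Unitization K A) N
  let E : ModuleCat (Unitization K A) := Injective.under N'
  have := Module.injective_module_of_injective_object (Unitization K A) E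
    (inj := Injective.injective_under N')
  let jU : N →ₗ[Unitization K A] E := (Injective.ι N').hom
  exact ⟨E, _, moduleOfUnitization K A E, nuModOfUnitization K A E,
    restrictScalarsOfUnitization jU, isAMap_restrictScalarsOfUnitization jU,
    (ModuleCat.mono_iff_injective (Injective.ι N')).mp inferInstance,
    isInjectiveNUMod_of_injective _⟩

variable {e : A}

theorem IsInjectiveNUMod.injInClass_aeSpan {E : Type u} [AddCommGroup E] [Module K E]
    [NUMod K A E] (hE : IsInjectiveNUMod K A E) : InjInClass K A e (aeSpan K e E) := by
  intro X Y _ _ _ _ _ _ _ _ _ hY ι hι hιinj f hf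
  obtain ⟨g, hg, hgι⟩ := hE X Y ι hι hιinj ((aeSpan K e E).subtype ∘ₗ f)
    fun a x => congrArg Subtype.val (hf a x)
  exact ⟨hg.codRestrictAeSpan hY, hg.isAMap_codRestrictAeSpan hY,
    LinearMap.ext fun x => Subtype.ext (LinearMap.congr_fun hgι x)⟩

theorem LeftSpecial.range_le_map_aeSpan (hsp : LeftSpecial K A e) {M I : Type u}
    [AddCommGroup M] [Module K M] [NUMod K A M] [AddCommGroup I] [Module K I] [NUMod K A I]
    (hI : Nondeg K A I) (hItop : aeSpan K e I = ⊤) {g : M →ₗ[K] I} (hg : IsAMap K A g) :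
    LinearMap.range g ≤ (aeSpan K e M).map g := by
  have hspan := hsp I hI hItop ⊥ _ aStable_bot hg.aStable_range bot_le
  rw [bot_sup_eq] at hspan
  refine hspan.trans (Submodule.span_le.mpr ?_)
  rintro _ ⟨a, _, ⟨m, rfl⟩, rfl⟩
  exact ⟨a • e • m, Submodule.subset_span ⟨a, m, rfl⟩, by rw [hg, hg]⟩

end

/-- for a left special and left split idempotent `e` of an idempotented
algebra `A` and any non-degenerate `A`-module `M`, the short exact sequence
`0 → AeM → M → M/AeM → 0` splits: `AeM` admits an `A`-stable complement `C` in `M`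
(so `M ≅ AeM ⊕ M/AeM`), and `C` is killed by `e`; hence `M(A)` decomposes as the
direct sum of `M(A)_e` and `M(A)_e^⊥ = {M | eM = 0}`. -/
theorem split_decomposition
    {K A : Type u} [CommRing K] [NonUnitalRing A] [Module K A]
    [SMulCommClass K A A] [IsScalarTower K A A]
    (hA : Idempotented A) (e : A) (he : e * e = e)
    (hsp : LeftSpecial K A e) (hsplit : LeftSplit K A e)
    (M : Type u) [AddCommGroup M] [Module K M] [NUMod K A M] (hM : Nondeg K A M) :
    ∃ C : Submodule K M, AStable K A C ∧ IsCompl (aeSpan K e M) C ∧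
      ∀ c ∈ C, e • c = 0 := by
  obtain ⟨E, _, _, _, j, hj, hjinj, hE⟩ :=
    exists_embedding_isInjectiveNUMod (K := K) (A := A) (aeSpan K e M)
  have hEnd := nondeg_aeSpan K E hA e
  have hEtop := aeSpan_aeSpan_eq_top K E he
  let f := hj.codRestrictAeSpan (aeSpan_aeSpan_eq_top K M he)
  obtain ⟨g, hg, hgf⟩ := hsplit _ hEnd hEtop hE.injInClass_aeSpan _ M (nondeg_aeSpan K M hA e) hM
    _ (isAMap_aeSpan_subtype e) (aeSpan K e M).injective_subtype f
    (hj.isAMap_codRestrictAeSpan _)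
  have hdisj : Disjoint (aeSpan K e M) (LinearMap.ker g) := by
    rw [← LinearMap.injective_domRestrict_iff, LinearMap.domRestrict, hgf]
    exact (LinearMap.injective_codRestrict_iff _).mpr hjinj
  have hcodisj : Codisjoint (aeSpan K e M) (LinearMap.ker g) :=
    Submodule.map_eq_range_iff.mp
      (LinearMap.map_le_range.antisymm (hsp.range_le_map_aeSpan hEnd hEtop hg))
  refine ⟨LinearMap.ker g, hg.aStable_ker, ⟨hdisj, hcodisj⟩, fun c hc => ?_⟩
  refine LinearMap.disjoint_ker.mp hdisj _ (asmul_mem_aeSpan he c) ?_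
  rw [hg, LinearMap.mem_ker.mp hc, asmul_zero K A]
end
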